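/- arXiv:1106.5416 — 6 statements merged into one kernel-verified Lean document; each statement's English description precedes it below -/
import Mathlib

section
/- Let R be a commutative Q-algebra and let f(z) = z + higher order terms be a formal power series over R with f(0)=0 and f'(0)=1, so that f has a compositional inverse f^{-1}. Then for every k ≥ 0, the residue res_{z=0} f(z)^{-k-1} equals the coefficient of u^k in the power series (f^{-1})'(u), the formal derivative of the compositional inverse of f. -/
open PowerSeries LaurentSeries

/-- Composition `f ∘ g` of formal power series (intended for `g` with zero constant term):
the coefficient of `Xⁿ` in `Σᵢ (coeff i f) · gⁱ`. -/
noncomputable def psComp {R : Type*} [CommRing R] (f g : R⟦X⟧) : R⟦X⟧ :=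
  PowerSeries.mk fun n => ∑ i ∈ Finset.range (n + 1),
    PowerSeries.coeff i f * PowerSeries.coeff n (g ^ i)

theorem coeff_derivativeFun' {R : Type*} [CommRing R] (f : R⟦X⟧) (n : ℕ) :
    coeff n f.derivativeFun = coeff (n + 1) f * (n + 1) :=
  coeff_derivative f n

namespace Lagrange
variable {R : Type*} [CommRing R]

theorem coeff_psComp (f g : R⟦X⟧) (n : ℕ) :
    coeff n (psComp f g) = ∑ i ∈ Finset.range (n + 1),
      coeff i f * coeff n (g ^ i) := by
  simp [psComp]

theorem coeff_pow_eq_zero {g : R⟦X⟧} (hg : constantCoeff g = 0)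
    {i m : ℕ} (h : m < i) : coeff m (g ^ i) = 0 := by
  have : (X : R⟦X⟧) ^ i ∣ g ^ i :=
    pow_dvd_pow_of_dvd (PowerSeries.X_dvd_iff.2 hg) i
  exact (PowerSeries.X_pow_dvd_iff.1 this) m h

theorem coeff_eval₂_trunc {g : R⟦X⟧} (hg : constantCoeff g = 0)
    (p : R⟦X⟧) {m N : ℕ} (hmN : m < N) :
    coeff m ((trunc N p).eval₂ C g) = coeff m (psComp p g) := by
  rw [eval₂_trunc_eq_sum_range, map_sum, coeff_psComp]
  have h1 : ∀ i ∈ Finset.range N, coeff m (C (coeff i p) * g ^ i)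
      = coeff i p * coeff m (g ^ i) := fun i _ => coeff_C_mul _ _ _
  rw [Finset.sum_congr rfl h1]
  symm
  apply Finset.sum_subset
  · exact Finset.range_subset_range.2 hmN
  · intro i _ hi
    rw [Finset.mem_range, not_lt] at hi
    rw [coeff_pow_eq_zero hg (by omega), mul_zero]

theorem psComp_mul {g : R⟦X⟧} (hg : constantCoeff g = 0) (p q : R⟦X⟧) :
    psComp (p * q) g = psComp p g * psComp q g := by
  ext n
  set N := n + 1 with hN
  have key : (trunc N p * trunc N q - trunc N (p * q) : Polynomial R) ≠ 0 →
      True := fun _ => trivial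
  have hdvd : (Polynomial.X : Polynomial R) ^ N ∣
      (trunc N p * trunc N q - trunc N (p * q)) := by
    rw [Polynomial.X_pow_dvd_iff]
    intro d hd
    rw [Polynomial.coeff_sub, Polynomial.coeff_mul, coeff_trunc, if_pos hd,
      PowerSeries.coeff_mul, sub_eq_zero]
    apply Finset.sum_congr rfl
    rintro ⟨a, b⟩ hab
    rw [Finset.HasAntidiagonal.mem_antidiagonal] at hab
    rw [coeff_trunc, coeff_trunc, if_pos (by omega), if_pos (by omega)]
  obtain ⟨E, hE⟩ := hdvd
  have heq : ((trunc N (p * q)).eval₂ C g : R⟦X⟧)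
      = (trunc N p).eval₂ C g * (trunc N q).eval₂ C g
        - g ^ N * E.eval₂ C g := by
    have := congrArg (Polynomial.eval₂ C g) hE
    rw [Polynomial.eval₂_sub, Polynomial.eval₂_mul, Polynomial.eval₂_mul,
      Polynomial.eval₂_pow, Polynomial.eval₂_X] at this
    linear_combination -this
  have hzero : coeff n (g ^ N * E.eval₂ C g) = 0 := by
    have : (X : R⟦X⟧) ^ N ∣ g ^ N * E.eval₂ C g :=
      dvd_mul_of_dvd_left (pow_dvd_pow_of_dvd (PowerSeries.X_dvd_iff.2 hg) N) _
    exact PowerSeries.X_pow_dvd_iff.1 this n (by omega)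
  have h1 : coeff n (psComp (p * q) g)
      = coeff n ((trunc N p).eval₂ C g * (trunc N q).eval₂ C g) := by
    rw [← coeff_eval₂_trunc hg (p * q) (show n < N by omega), heq, map_sub, hzero, sub_zero]
  rw [h1, PowerSeries.coeff_mul, PowerSeries.coeff_mul]
  apply Finset.sum_congr rfl
  rintro ⟨a, b⟩ hab
  rw [Finset.HasAntidiagonal.mem_antidiagonal] at hab
  rw [coeff_eval₂_trunc hg p (by omega), coeff_eval₂_trunc hg q (by omega)]

theorem psComp_one {g : R⟦X⟧} : psComp (1 : R⟦X⟧) g = 1 := by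
  ext n
  rw [coeff_psComp]
  rw [Finset.sum_eq_single 0]
  · simp
  · intro i _ hi
    rw [PowerSeries.coeff_one, if_neg hi, zero_mul]
  · simp

theorem psComp_pow {g : R⟦X⟧} (hg : constantCoeff g = 0) (f : R⟦X⟧) (j : ℕ) :
    psComp (f ^ j) g = (psComp f g) ^ j := by
  induction j with
  | zero => simpa using psComp_one
  | succ j ih => rw [pow_succ, pow_succ, psComp_mul hg, ih]


theorem coeff_pow_self {g : R⟦X⟧} (hg : constantCoeff g = 0) (n : ℕ) :
    coeff n (g ^ n) = (coeff 1 g) ^ n := by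
  obtain ⟨w, hw⟩ := PowerSeries.X_dvd_iff.2 hg
  have hw1 : constantCoeff w = coeff 1 g := by
    rw [hw, ← coeff_zero_eq_constantCoeff_apply]
    rw [PowerSeries.coeff_succ_X_mul]
  subst hw
  have : coeff n ((X:R⟦X⟧)^n * w^n) = coeff 0 (w^n) := by
    simpa using PowerSeries.coeff_X_pow_mul (w^n) n 0
  rw [mul_pow, this, coeff_zero_eq_constantCoeff_apply, map_pow, hw1]

/-- right-composition with `g` (with `g₁ = 1`) is injective -/
theorem psComp_cancel {g : R⟦X⟧} (hg : constantCoeff g = 0)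
    (hg1 : coeff 1 g = 1) {T S : R⟦X⟧} (h : psComp T g = psComp S g) :
    T = S := by
  ext n
  induction n using Nat.strong_induction_on with
  | _ n ih =>
    have h' := congrArg (coeff n) h
    rw [coeff_psComp, coeff_psComp, Finset.sum_range_succ, Finset.sum_range_succ] at h'
    have hs : ∑ i ∈ Finset.range n, coeff i T * coeff n (g ^ i)
        = ∑ i ∈ Finset.range n, coeff i S * coeff n (g ^ i) :=
      Finset.sum_congr rfl fun i hi => by rw [ih i (Finset.mem_range.1 hi)]
    rw [hs] at h'
    have h2 := add_left_cancel h'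
    rwa [coeff_pow_self hg, hg1, one_pow, mul_one, mul_one] at h2

/-- `psComp (psComp g f) g = g` given `psComp f g = X`. -/
theorem psComp_assoc_special {f g : R⟦X⟧} (hf0 : constantCoeff f = 0)
    (hg : constantCoeff g = 0) (hfg : psComp f g = X) :
    psComp (psComp g f) g = g := by
  ext n
  rw [coeff_psComp]
  have h1 : ∀ i ∈ Finset.range (n+1), coeff i (psComp g f) * coeff n (g ^ i)
      = ∑ j ∈ Finset.range (n+1), coeff j g * coeff i (f ^ j) * coeff n (g ^ i) := by
    intro i hi
    rw [Finset.mem_range] at hi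
    rw [coeff_psComp, Finset.sum_mul]
    apply Finset.sum_subset (Finset.range_subset_range.2 (by omega))
    intro j _ hj
    rw [Finset.mem_range, not_lt] at hj
    rw [coeff_pow_eq_zero hf0 (by omega), mul_zero, zero_mul]
  rw [Finset.sum_congr rfl h1, Finset.sum_comm]
  have h2 : ∀ j ∈ Finset.range (n+1),
      (∑ i ∈ Finset.range (n+1), coeff j g * coeff i (f ^ j) * coeff n (g ^ i))
      = coeff j g * coeff n ((X : R⟦X⟧) ^ j) := by
    intro j _
    rw [← hfg, ← psComp_pow hg, coeff_psComp, Finset.mul_sum]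
    apply Finset.sum_congr rfl
    intro i _
    ring
  rw [Finset.sum_congr rfl h2]
  rw [Finset.sum_congr rfl (fun j _ => by rw [PowerSeries.coeff_X_pow])]
  rw [Finset.sum_eq_single n]
  · simp
  · intro j _ hj
    rw [if_neg (fun hh => hj hh.symm), mul_zero]
  · intro hmem
    exact absurd (Finset.mem_range.2 (by omega)) hmem

theorem psComp_X_left {g : R⟦X⟧} (hg : constantCoeff g = 0) :
    psComp (X : R⟦X⟧) g = g := by
  ext n
  rw [coeff_psComp]
  rw [Finset.sum_congr rfl (fun j _ => by rw [PowerSeries.coeff_X])]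
  rcases Nat.eq_zero_or_pos n with hn | hn
  · subst hn
    rw [Finset.sum_range_one, if_neg (by norm_num), zero_mul,
      coeff_zero_eq_constantCoeff_apply, hg]
  · rw [Finset.sum_eq_single 1]
    · simp
    · intro i _ hi
      rw [if_neg hi, zero_mul]
    · intro h
      exact absurd (Finset.mem_range.2 (by omega)) h

theorem psComp_inv_comm {f g : R⟦X⟧} (hf0 : constantCoeff f = 0)
    (hg0 : constantCoeff g = 0) (hg1 : coeff 1 g = 1)
    (hfg : psComp f g = X) : psComp g f = X := by
  apply psComp_cancel hg0 hg1
  rw [psComp_assoc_special hf0 hg0 hfg, psComp_X_left hg0]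


theorem derivativeFun_pow (f : R⟦X⟧) (j : ℕ) :
    derivativeFun (f ^ (j + 1)) = (j + 1) • (f ^ j * derivativeFun f) := by
  induction j with
  | zero => simp
  | succ j ih =>
    rw [pow_succ, derivativeFun_mul, ih]
    simp only [smul_eq_mul, nsmul_eq_mul]
    push_cast
    ring

theorem derivativeFun_X : derivativeFun (X : R⟦X⟧) = 1 := by
  ext n
  rw [coeff_derivativeFun', PowerSeries.coeff_X, PowerSeries.coeff_one]
  rcases Nat.eq_zero_or_pos n with hn | hn
  · subst hn; norm_num
  · rw [if_neg (by omega), if_neg (by omega), zero_mul]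

theorem nat_mul_cancel {R : Type*} [CommRing R] [Algebra ℚ R] {t : ℕ} (ht : t ≠ 0)
    {x y : R} (h : (t : R) * x = (t : R) * y) : x = y := by
  have ht' : (t : ℚ) ≠ 0 := Nat.cast_ne_zero.2 ht
  have h1 : ((t : ℚ)) • x = ((t : ℚ)) • y := by
    rw [Algebra.smul_def, Algebra.smul_def, map_natCast, h]
  calc x = (t : ℚ)⁻¹ • ((t : ℚ) • x) := (inv_smul_smul₀ ht' x).symm
    _ = (t : ℚ)⁻¹ • ((t : ℚ) • y) := by rw [h1]
    _ = y := inv_smul_smul₀ ht' y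

end Lagrange

theorem residue_of_inverse_powers_eq_coeff_deriv_inverse'
    (R : Type*) [CommRing R] [Algebra ℚ R] (f g : R⟦X⟧)
    (hf0 : constantCoeff f = 0) (hf1 : coeff 1 f = 1)
    (hg0 : constantCoeff g = 0) (hfg : psComp f g = X)
    (finv : LaurentSeries R) (hfinv : (f : LaurentSeries R) * finv = 1) :
    ∀ k : ℕ, (finv ^ (k + 1)).coeff (-1) = coeff k g.derivativeFun := by
  intro k
  -- `h` with `f = X * h`, `h(0) = 1`, and its inverse `A`
  set h : R⟦X⟧ := PowerSeries.mk fun n => coeff (n + 1) f with hh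
  have hfXh : f = X * h := by
    ext n
    cases n with
    | zero =>
      rw [coeff_zero_eq_constantCoeff_apply, hf0, coeff_zero_eq_constantCoeff_apply,
        map_mul, constantCoeff_X, zero_mul]
    | succ n => rw [PowerSeries.coeff_succ_X_mul, hh, coeff_mk]
  have hh0 : constantCoeff h = 1 := by
    rw [← coeff_zero_eq_constantCoeff_apply, hh, coeff_mk]; exact hf1
  set A := PowerSeries.invOfUnit h 1 with hA
  have hhA : h * A = 1 := PowerSeries.mul_invOfUnit h 1 (by rw [hh0]; rfl)
  -- the compositional inverse identity in the other order
  have hg1 : coeff 1 g = 1 := by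
    have h1 := congrArg (coeff 1) hfg
    rw [Lagrange.coeff_psComp, Finset.sum_range_succ, Finset.sum_range_one,
      pow_zero, pow_one, PowerSeries.coeff_one, if_neg one_ne_zero, mul_zero, zero_add,
      hf1, one_mul, PowerSeries.coeff_X, if_pos rfl] at h1
    exact h1
  have hstar : psComp g f = X := Lagrange.psComp_inv_comm hf0 hg0 hg1 hfg
  -- Laurent series reduction : residue of `finv^(k+1)` is `coeff k (A^(k+1))`
  set cand : LaurentSeries R :=
    HahnSeries.single (-(k + 1 : ℤ)) 1 * ((A ^ (k + 1) : R⟦X⟧) : LaurentSeries R) with hcand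
  have hfL : ((f ^ (k + 1) : R⟦X⟧) : LaurentSeries R) * cand = 1 := by
    rw [hcand, hfXh, mul_pow, map_mul]
    calc (HahnSeries.ofPowerSeries ℤ R) (X ^ (k+1)) * (HahnSeries.ofPowerSeries ℤ R) (h ^ (k+1)) *
          (HahnSeries.single (-(k + 1 : ℤ)) 1 * ((A ^ (k + 1) : R⟦X⟧) : LaurentSeries R))
        = ((HahnSeries.ofPowerSeries ℤ R) (X ^ (k+1)) * HahnSeries.single (-(k + 1 : ℤ)) 1) *
          ((HahnSeries.ofPowerSeries ℤ R) (h ^ (k+1)) * ((A ^ (k + 1) : R⟦X⟧) : LaurentSeries R)) := by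
          ring
      _ = 1 := by
          rw [HahnSeries.ofPowerSeries_X_pow, HahnSeries.single_mul_single, one_mul]
          have e1 : (((k+1 : ℕ) : ℤ)) + (-(k + 1 : ℤ)) = 0 := by push_cast; ring
          have e2 : ((A ^ (k + 1) : R⟦X⟧) : LaurentSeries R)
              = (HahnSeries.ofPowerSeries ℤ R) (A ^ (k+1)) := rfl
          rw [e1, HahnSeries.single_zero_one, one_mul, e2, ← map_mul, ← mul_pow, hhA,
            one_pow, map_one]
  have hfinvpow : finv ^ (k + 1) = cand := by
    have h1 : ((f : LaurentSeries R)) ^ (k + 1) * finv ^ (k + 1) = 1 := by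
      rw [← mul_pow, hfinv, one_pow]
    have h2 : ((f ^ (k + 1) : R⟦X⟧) : LaurentSeries R) = ((f : LaurentSeries R)) ^ (k + 1) :=
      map_pow (HahnSeries.ofPowerSeries ℤ R) f (k + 1)
    calc finv ^ (k + 1) = finv ^ (k + 1) * (((f ^ (k + 1) : R⟦X⟧) : LaurentSeries R) * cand) := by
          rw [hfL, mul_one]
      _ = (((f : LaurentSeries R)) ^ (k + 1) * finv ^ (k + 1)) * cand := by rw [h2]; ring
      _ = cand := by rw [h1, one_mul]
  have hres : cand.coeff (-1) = coeff k (A ^ (k + 1)) := by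
    have e1 : (-1 : ℤ) = (k : ℤ) + (-(k + 1 : ℤ)) := by ring
    rw [hcand, e1, HahnSeries.coeff_single_mul_add, one_mul, coeff_coe_powerSeries]
  rw [hfinvpow, hres]
  -- main computation
  clear hres hfinvpow hfL hcand hfinv cand finv
  set P : R⟦X⟧ := ∑ j ∈ Finset.range (k + 1),
      (coeff (j + 1) g) • derivativeFun (f ^ (j + 1)) with hP
  have hP1 : ∀ n, n ≤ k → coeff n P = if n = 0 then 1 else 0 := by
    intro n hn
    rw [hP, map_sum]
    have e1 : ∀ j ∈ Finset.range (k + 1),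
        coeff n ((coeff (j + 1) g) • derivativeFun (f ^ (j + 1)))
          = (coeff (j + 1) g * coeff (n + 1) (f ^ (j + 1))) * ((n : R) + 1) := by
      intro j _
      rw [map_smul, smul_eq_mul, coeff_derivativeFun']
      ring
    rw [Finset.sum_congr rfl e1, ← Finset.sum_mul]
    have e2 : ∑ j ∈ Finset.range (k + 1), coeff (j + 1) g * coeff (n + 1) (f ^ (j + 1))
        = ∑ j ∈ Finset.range (k + 2), coeff j g * coeff (n + 1) (f ^ j) := by
      rw [Finset.sum_range_succ' (fun j => coeff j g * coeff (n + 1) (f ^ j)) (k + 1)]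
      have : coeff 0 g = 0 := by rw [coeff_zero_eq_constantCoeff_apply, hg0]
      rw [this, zero_mul, add_zero]
    have e3 : ∑ j ∈ Finset.range (k + 2), coeff j g * coeff (n + 1) (f ^ j)
        = ∑ j ∈ Finset.range (n + 2), coeff j g * coeff (n + 1) (f ^ j) := by
      symm
      apply Finset.sum_subset (Finset.range_subset_range.2 (by omega))
      intro j _ hj
      rw [Finset.mem_range, not_lt] at hj
      rw [Lagrange.coeff_pow_eq_zero hf0 (by omega), mul_zero]
    have e4 : ∑ j ∈ Finset.range (n + 2), coeff j g * coeff (n + 1) (f ^ j)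
        = coeff (n + 1) (X : R⟦X⟧) := by rw [← hstar, Lagrange.coeff_psComp]
    rw [e2, e3, e4, PowerSeries.coeff_X]
    by_cases hn0 : n = 0
    · subst hn0; norm_num
    · rw [if_neg (by omega), if_neg hn0, zero_mul]
  have hP2 : coeff k (P * A ^ (k + 1)) = coeff k (A ^ (k + 1)) := by
    rw [PowerSeries.coeff_mul, Finset.Nat.sum_antidiagonal_eq_sum_range_succ_mk]
    rw [Finset.sum_eq_single 0]
    · rw [hP1 0 (by omega), if_pos rfl, one_mul, Nat.sub_zero]
    · intro m hm hm0
      rw [Finset.mem_range] at hm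
      rw [hP1 m (by omega), if_neg hm0, zero_mul]
    · intro hmem
      exact absurd (Finset.mem_range.2 (by omega)) hmem
  have hP3 : coeff k (P * A ^ (k + 1)) = ∑ j ∈ Finset.range (k + 1),
      coeff (j + 1) g * coeff k (derivativeFun (f ^ (j + 1)) * A ^ (k + 1)) := by
    rw [hP, Finset.sum_mul, map_sum]
    apply Finset.sum_congr rfl
    intro j _
    rw [smul_mul_assoc, map_smul, smul_eq_mul]
  -- the key residue computation for each `j ≤ k`
  have hf' : derivativeFun f = h + X * derivativeFun h := by
    rw [hfXh, derivativeFun_mul, Lagrange.derivativeFun_X, smul_eq_mul, smul_eq_mul,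
      mul_one]
    ring
  have hA' : h * derivativeFun A + A * derivativeFun h = 0 := by
    have h1 := congrArg derivativeFun hhA
    rw [derivativeFun_mul, derivativeFun_one, smul_eq_mul, smul_eq_mul] at h1
    linear_combination h1
  have hP4 : ∀ j, j ≤ k →
      coeff k (derivativeFun (f ^ (j + 1)) * A ^ (k + 1))
        = if j = k then ((k : R) + 1) else 0 := by
    intro j hj
    obtain ⟨t, rfl⟩ := Nat.exists_eq_add_of_le hj
    rw [Lagrange.derivativeFun_pow, smul_mul_assoc, map_nsmul, nsmul_eq_mul]
    have claim1 : h ^ (j + 1) * A ^ (j + t + 1) = A ^ t := by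
      calc h ^ (j + 1) * A ^ (j + t + 1) = (h * A) ^ (j + 1) * A ^ t := by
            rw [show j + t + 1 = (j + 1) + t by omega, pow_add, mul_pow]; ring
        _ = A ^ t := by rw [hhA, one_pow, one_mul]
    have claim2 : h ^ j * A ^ (j + t + 1) = A ^ (t + 1) := by
      calc h ^ j * A ^ (j + t + 1) = (h * A) ^ j * A ^ (t + 1) := by
            rw [show j + t + 1 = j + (t + 1) by omega, pow_add, mul_pow]; ring
        _ = A ^ (t + 1) := by rw [hhA, one_pow, one_mul]
    have key : f ^ j * derivativeFun f * A ^ (j + t + 1)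
        = X ^ j * (A ^ t + X * (derivativeFun h * A ^ (t + 1))) := by
      calc f ^ j * derivativeFun f * A ^ (j + t + 1)
          = X ^ j * (h ^ (j + 1) * A ^ (j + t + 1)
            + X * (derivativeFun h * (h ^ j * A ^ (j + t + 1)))) := by
            rw [hf', hfXh, mul_pow]; ring
        _ = _ := by rw [claim1, claim2]
    rw [key]
    have hcoeff : coeff (j + t) (X ^ j * (A ^ t + X * (derivativeFun h * A ^ (t + 1))))
        = coeff t (A ^ t + X * (derivativeFun h * A ^ (t + 1))) := by
      rw [show j + t = t + j by omega]
      exact PowerSeries.coeff_X_pow_mul _ j t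
    rw [hcoeff]
    rcases Nat.eq_zero_or_pos t with ht | ht
    · subst ht
      rw [if_pos (by omega)]
      rw [map_add, pow_zero, coeff_zero_eq_constantCoeff_apply, map_one,
        coeff_zero_eq_constantCoeff_apply, map_mul, constantCoeff_X, zero_mul, add_zero,
        mul_one]
      push_cast
      ring
    · rw [if_neg (by omega)]
      obtain ⟨s, rfl⟩ : ∃ s, t = s + 1 := ⟨t - 1, by omega⟩
      rw [map_add, PowerSeries.coeff_succ_X_mul]
      have hAs : A ^ s * derivativeFun A = -(derivativeFun h * A ^ (s + 2)) := by
        calc A ^ s * derivativeFun A = (h * derivativeFun A) * A ^ (s + 1) := by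
              rw [show A ^ s * derivativeFun A = (A ^ s * derivativeFun A) * (h * A) by
                rw [hhA, mul_one]]
              ring
          _ = (-(A * derivativeFun h)) * A ^ (s + 1) := by
              rw [show h * derivativeFun A = -(A * derivativeFun h) by linear_combination hA']
          _ = -(derivativeFun h * A ^ (s + 2)) := by ring
      have hderiv : derivativeFun (A ^ (s + 1)) = -((s + 1) • (derivativeFun h * A ^ (s + 2))) := by
        rw [Lagrange.derivativeFun_pow, hAs]
        simp only [nsmul_eq_mul, smul_eq_mul]
        push_cast
        ring
      have hc := congrArg (coeff s) hderiv
      rw [coeff_derivativeFun', map_neg, map_nsmul, nsmul_eq_mul] at hc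
      have hc2 : ((s : R) + 1) * coeff (s + 1) (A ^ (s + 1))
          = ((s : R) + 1) * (-(coeff s (derivativeFun h * A ^ (s + 1 + 1)))) := by
        push_cast at hc ⊢
        linear_combination hc
      have hcanc := Lagrange.nat_mul_cancel (t := s + 1) (R := R) (by omega)
        (x := coeff (s + 1) (A ^ (s + 1)))
        (y := -(coeff s (derivativeFun h * A ^ (s + 1 + 1)))) (by push_cast; exact hc2)
      rw [hcanc]
      ring
  rw [← hP2, hP3]
  rw [Finset.sum_congr rfl (fun j hj => by
    rw [hP4 j (by simpa using Nat.lt_succ_iff.1 (Finset.mem_range.1 hj))])]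
  rw [Finset.sum_eq_single k]
  · rw [if_pos rfl, coeff_derivativeFun']
  · intro j _ hjk
    rw [if_neg hjk, mul_zero]
  · intro hmem
    exact absurd (Finset.mem_range.2 (by omega)) hmem


/-- if `f ∈ R[[z]]` over a commutative `ℚ`-algebra `R` has `f(0)=0`, `f'(0)=1`,
and `g` is its compositional inverse (`g(0)=0`, `f(g(u))=u`), then for every `k ≥ 0` the
residue `res_{z=0} f(z)^{-k-1}` equals the coefficient of `u^k` in `(f⁻¹)'(u) = g'(u)`.
Here `f(z)^{-k-1}` is computed in the Laurent series ring via any multiplicative inverse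
`finv` of (the image of) `f`. -/
theorem residue_of_inverse_powers_eq_coeff_deriv_inverse
    (R : Type*) [CommRing R] [Algebra ℚ R] (f g : R⟦X⟧)
    (hf0 : constantCoeff f = 0) (hf1 : coeff 1 f = 1)
    (hg0 : constantCoeff g = 0) (hfg : psComp f g = X)
    (finv : LaurentSeries R) (hfinv : (f : LaurentSeries R) * finv = 1) :
    ∀ k : ℕ, (finv ^ (k + 1)).coeff (-1) = coeff k g.derivativeFun := by
  exact
    residue_of_inverse_powers_eq_coeff_deriv_inverse' R f g hf0 hf1 hg0 hfg finv hfinv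
end

section
/- Let R be a commutative Q-algebra and let ℓ(u) = Σ_{k≥0} a_k u^{k+1}/(k+1) ∈ R[[u]] with a_0 = 1 (a 'logarithm' series), and let e = ℓ^{-1} be its compositional inverse ('exponential'). Then for all k ≥ 0, res_{z=0} e(z)^{-k-1} = a_k, i.e. the residues of negative powers of the exponential recover the coefficients of the derivative ℓ'(u) = Σ_{k≥0} a_k u^k. -/
open PowerSeries LaurentSeries

section Aux

variable {R : Type*} [CommRing R]

private lemma aux_coeff_derivativeFun (f : R⟦X⟧) (n : ℕ) :
    PowerSeries.coeff n f.derivativeFun = PowerSeries.coeff (n + 1) f * (n + 1) :=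
  PowerSeries.coeff_derivative f n

private lemma aux_nsmul_cancel [Algebra ℚ R] {m : ℕ} (hm : m ≠ 0) {x : R}
    (h : m • x = 0) : x = 0 := by
  have h' : (m : ℚ) • x = 0 := by rw [Nat.cast_smul_eq_nsmul]; exact h
  have h2 := congrArg (fun y => (m : ℚ)⁻¹ • y) h'
  have hm' : (m : ℚ) ≠ 0 := by exact_mod_cast hm
  simpa [smul_smul, inv_mul_cancel₀ hm'] using h2

private lemma aux_deriv_pow (f : R⟦X⟧) (j : ℕ) :
    derivativeFun (f ^ (j + 1)) = (j + 1) • (f ^ j * derivativeFun f) := by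
  induction j with
  | zero => simp
  | succ j ih =>
      rw [pow_succ, derivativeFun_mul, ih]
      simp only [smul_eq_mul, nsmul_eq_mul]
      push_cast
      ring

/-- Key identity: `∑_{j ≤ n} a_j * [x^n](e^j e') = δ_{n,0}`. -/
private lemma aux_key1 (a : ℕ → R) (ℓ e : R⟦X⟧)
    (hl' : ℓ.derivativeFun = PowerSeries.mk a) (hle : psComp ℓ e = X) (n : ℕ) :
    ∑ j ∈ Finset.range (n + 1), a j * PowerSeries.coeff n (e ^ j * e.derivativeFun)
      = if n = 0 then 1 else 0 := by
  have h1 := congrArg (PowerSeries.coeff (n + 1)) hle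
  rw [psComp, PowerSeries.coeff_mk, PowerSeries.coeff_X] at h1
  have h2 : ∑ i ∈ Finset.range (n + 2),
      PowerSeries.coeff i ℓ * PowerSeries.coeff (n + 1) (e ^ i) * ((n : R) + 1)
      = (if n + 1 = 1 then (1 : R) else 0) * ((n : R) + 1) := by
    rw [← Finset.sum_mul, h1]
  calc
    ∑ j ∈ Finset.range (n + 1), a j * PowerSeries.coeff n (e ^ j * e.derivativeFun)
        = ∑ i ∈ Finset.range (n + 2),
            PowerSeries.coeff i ℓ * PowerSeries.coeff (n + 1) (e ^ i) * ((n : R) + 1) := by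
          conv_rhs => rw [Finset.sum_range_succ']
          have h0 : PowerSeries.coeff 0 ℓ * PowerSeries.coeff (n + 1) (e ^ 0) * ((n : R) + 1)
              = 0 := by simp [PowerSeries.coeff_one]
          rw [h0, add_zero]
          refine Finset.sum_congr rfl fun j _ => ?_
          have haj : a j = PowerSeries.coeff (j + 1) ℓ * ((j : R) + 1) := by
            have := congrArg (PowerSeries.coeff j) hl'
            rw [aux_coeff_derivativeFun, PowerSeries.coeff_mk] at this
            exact_mod_cast this.symm
          have hpow : PowerSeries.coeff (n + 1) (e ^ (j + 1)) * ((n : R) + 1)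
              = ((j : R) + 1) * PowerSeries.coeff n (e ^ j * e.derivativeFun) := by
            have hd : PowerSeries.coeff n (derivativeFun (e ^ (j + 1)))
                = PowerSeries.coeff (n + 1) (e ^ (j + 1)) * ((n : R) + 1) := by
              rw [aux_coeff_derivativeFun]
            rw [← hd, aux_deriv_pow, map_nsmul, nsmul_eq_mul]
            push_cast; ring
          rw [haj]
          linear_combination (-(PowerSeries.coeff (j + 1) ℓ)) * hpow
    _ = (if n + 1 = 1 then (1 : R) else 0) * ((n : R) + 1) := h2
    _ = if n = 0 then 1 else 0 := by cases n <;> simp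

/-- Residue lemma: `[x^m]((v^(m+1)) * (Xu)') = δ_{m,0}` when `uv = 1`, `u(0)=1`. -/
private lemma aux_key2 [Algebra ℚ R] (u v : R⟦X⟧) (huv : u * v = 1)
    (hu0 : constantCoeff u = 1) (m : ℕ) :
    PowerSeries.coeff m (v ^ (m + 1) * derivativeFun (X * u))
      = if m = 0 then 1 else 0 := by
  have hv0 : constantCoeff v = 1 := by
    have := congrArg constantCoeff huv
    simpa [hu0] using this
  have hDe : derivativeFun ((X : R⟦X⟧) * u) = u + X * derivativeFun u := by
    have h := derivativeFun_mul (X : R⟦X⟧) u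
    have hX : derivativeFun (X : R⟦X⟧) = 1 := PowerSeries.derivative_X (R := R)
    rw [hX] at h
    rw [h]; simp [smul_eq_mul]; ring
  cases m with
  | zero =>
      rw [if_pos rfl, pow_one, hDe, PowerSeries.coeff_zero_eq_constantCoeff_apply,
        map_mul, map_add, map_mul, hv0, hu0, PowerSeries.constantCoeff_X]
      ring
  | succ m =>
      rw [if_neg (Nat.succ_ne_zero m)]
      have hDuv : u * derivativeFun v + v * derivativeFun u = 0 := by
        have h := derivativeFun_mul u v
        rw [huv, derivativeFun_one] at h
        simpa [smul_eq_mul] using h.symm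
      have hvDu : v ^ (m + 2) * derivativeFun u = -(v ^ m * derivativeFun v) := by
        linear_combination v ^ (m + 1) * hDuv - (v ^ m * derivativeFun v) * huv
      have h1 : v ^ (m + 1 + 1) * derivativeFun ((X : R⟦X⟧) * u)
          = v ^ (m + 1) - X * (v ^ m * derivativeFun v) := by
        rw [hDe]
        linear_combination v ^ (m + 1) * huv + (X : R⟦X⟧) * hvDu
      have h2 := congrArg (PowerSeries.coeff (m + 1)) h1
      rw [map_sub, PowerSeries.coeff_succ_X_mul] at h2
      have hder : ((m : R) + 1) * PowerSeries.coeff m (v ^ m * derivativeFun v)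
          = PowerSeries.coeff (m + 1) (v ^ (m + 1)) * ((m : R) + 1) := by
        have hd := congrArg (PowerSeries.coeff m) (aux_deriv_pow v m)
        rw [aux_coeff_derivativeFun, map_nsmul, nsmul_eq_mul] at hd
        push_cast at hd ⊢
        linear_combination -hd
      have hsm : (m + 1) • PowerSeries.coeff (m + 1)
          (v ^ (m + 1 + 1) * derivativeFun ((X : R⟦X⟧) * u)) = 0 := by
        rw [nsmul_eq_mul, h2]
        push_cast
        linear_combination -hder
      exact aux_nsmul_cancel (Nat.succ_ne_zero m) hsm

private lemma aux_coeff_epow_mul (u g : R⟦X⟧) {n j : ℕ} (h : n < j) :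
    PowerSeries.coeff n ((X * u) ^ j * g) = 0 := by
  rw [mul_pow, mul_assoc, PowerSeries.coeff_X_pow_mul', if_neg (not_le.mpr h)]

end Aux

/-- let `ℓ ∈ R[[u]]` be a logarithm series (`ℓ(0)=0`, `ℓ'(u) = Σ aₖ uᵏ` with
`a₀ = 1`) over a commutative `ℚ`-algebra, and let `e = ℓ⁻¹` be its compositional inverse
(`e(0)=0`, `ℓ(e(z))=z`). Then `res_{z=0} e(z)^{-k-1} = aₖ` for all `k ≥ 0`, where
`e(z)^{-k-1}` is computed via any multiplicative inverse `einv` of `e` in `R((z))`. -/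
theorem residues_of_exponential_recover_log_derivative
    (R : Type*) [CommRing R] [Algebra ℚ R] (a : ℕ → R) (ℓ e : R⟦X⟧)
    (hl0 : constantCoeff ℓ = 0) (hl' : ℓ.derivativeFun = PowerSeries.mk a)
    (ha0 : a 0 = 1)
    (he0 : constantCoeff e = 0) (hle : psComp ℓ e = X)
    (einv : LaurentSeries R) (heinv : (e : LaurentSeries R) * einv = 1) :
    ∀ k : ℕ, (einv ^ (k + 1)).coeff (-1) = a k := by
  intro k
  -- basic coefficient facts
  have hl1 : PowerSeries.coeff 1 ℓ = 1 := by
    have h := congrArg (PowerSeries.coeff 0) hl'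
    rw [aux_coeff_derivativeFun, PowerSeries.coeff_mk, ha0] at h
    simpa using h
  have he1 : PowerSeries.coeff 1 e = 1 := by
    have h := congrArg (PowerSeries.coeff 1) hle
    rw [psComp, PowerSeries.coeff_mk, PowerSeries.coeff_one_X] at h
    rw [Finset.sum_range_succ, Finset.sum_range_succ, Finset.sum_range_zero] at h
    simpa [PowerSeries.coeff_one, hl1] using h
  obtain ⟨u, hu⟩ : (X : R⟦X⟧) ∣ e := PowerSeries.X_dvd_iff.mpr he0
  have hu0 : constantCoeff u = 1 := by
    have h := he1
    rw [hu, PowerSeries.coeff_succ_X_mul] at h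
    simpa using h
  set v : R⟦X⟧ := PowerSeries.invOfUnit u 1 with hvdef
  have huv : u * v = 1 := PowerSeries.mul_invOfUnit u 1 (by simp [hu0])
  -- Step A : coeff k (v^(k+1)) = a k
  set De : R⟦X⟧ := e.derivativeFun with hDedef
  set T : R⟦X⟧ := ∑ j ∈ Finset.range (k + 1), PowerSeries.C (a j) * (e ^ j * De)
    with hTdef
  have hcoeffT : ∀ m ≤ k, PowerSeries.coeff m T = if m = 0 then 1 else 0 := by
    intro m hm
    rw [hTdef, map_sum]
    have hsplit : ∑ j ∈ Finset.range (k + 1),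
        PowerSeries.coeff m (PowerSeries.C (a j) * (e ^ j * De))
        = ∑ j ∈ Finset.range (m + 1),
            PowerSeries.coeff m (PowerSeries.C (a j) * (e ^ j * De)) := by
      refine (Finset.sum_subset (by intro x hx; simp at hx ⊢; omega) ?_).symm
      intro j hj hnj
      simp only [Finset.mem_range] at hj hnj
      have hmj : m < j := by omega
      rw [PowerSeries.coeff_C_mul, hu, aux_coeff_epow_mul u De hmj, mul_zero]
    rw [hsplit]
    simp_rw [PowerSeries.coeff_C_mul]
    exact aux_key1 a ℓ e hl' hle m
  have hT1 : (X : R⟦X⟧) ^ (k + 1) ∣ T - 1 := by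
    rw [PowerSeries.X_pow_dvd_iff]
    intro m hm
    rw [map_sub, hcoeffT m (Nat.lt_succ_iff.mp hm), PowerSeries.coeff_one]
    simp
  obtain ⟨c, hc⟩ := hT1
  have step1 : PowerSeries.coeff k (v ^ (k + 1))
      = PowerSeries.coeff k (v ^ (k + 1) * T) := by
    have hvT : v ^ (k + 1) * T = v ^ (k + 1) + X ^ (k + 1) * (v ^ (k + 1) * c) := by
      linear_combination v ^ (k + 1) * hc
    rw [hvT, map_add, PowerSeries.coeff_X_pow_mul', if_neg (by omega), add_zero]
  have step2 : PowerSeries.coeff k (v ^ (k + 1) * T)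
      = ∑ j ∈ Finset.range (k + 1),
          a j * PowerSeries.coeff k (v ^ (k + 1) * (e ^ j * De)) := by
    rw [hTdef, Finset.mul_sum, map_sum]
    refine Finset.sum_congr rfl fun j _ => ?_
    rw [mul_left_comm, PowerSeries.coeff_C_mul]
  have step3 : ∀ j ∈ Finset.range (k + 1),
      PowerSeries.coeff k (v ^ (k + 1) * (e ^ j * De))
        = if k - j = 0 then 1 else 0 := by
    intro j hj
    simp only [Finset.mem_range] at hj
    have hjk : j ≤ k := Nat.lt_succ_iff.mp hj
    have hj1 : v ^ j * u ^ j = 1 := by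
      rw [← mul_pow, mul_comm v u, huv, one_pow]
    have hk : k + 1 = (k - j + 1) + j := by omega
    have hrw : v ^ (k + 1) * (e ^ j * De)
        = X ^ j * (v ^ (k - j + 1) * De) := by
      rw [hu, mul_pow, hk, pow_add]
      linear_combination ((X : R⟦X⟧) ^ j * v ^ (k - j + 1) * De) * hj1
    rw [hrw, PowerSeries.coeff_X_pow_mul', if_pos hjk]
    have := aux_key2 u v huv hu0 (k - j)
    rw [← hu] at this
    exact this
  have stepA : PowerSeries.coeff k (v ^ (k + 1)) = a k := by
    rw [step1, step2, Finset.sum_congr rfl fun j hj => by rw [step3 j hj]]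
    rw [Finset.sum_eq_single_of_mem k (Finset.self_mem_range_succ k)]
    · simp
    · intro j hj hne
      simp only [Finset.mem_range] at hj
      rw [if_neg (by omega), mul_zero]
  -- Step B : Laurent series bookkeeping
  have hXu1 : einv * ((X : R⟦X⟧) : LaurentSeries R) * (u : LaurentSeries R) = 1 := by
    rw [mul_assoc, ← PowerSeries.coe_mul, ← hu, mul_comm, heinv]
  have hXv : einv * ((X : R⟦X⟧) : LaurentSeries R) = (v : LaurentSeries R) := by
    calc einv * ((X : R⟦X⟧) : LaurentSeries R)
        = einv * ((X : R⟦X⟧) : LaurentSeries R)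
            * ((u : LaurentSeries R) * (v : LaurentSeries R)) := by
          rw [← PowerSeries.coe_mul, huv, PowerSeries.coe_one, mul_one]
      _ = einv * ((X : R⟦X⟧) : LaurentSeries R) * (u : LaurentSeries R)
            * (v : LaurentSeries R) := by ring
      _ = (v : LaurentSeries R) := by rw [hXu1, one_mul]
  have hpow : einv ^ (k + 1) * HahnSeries.single ((k + 1 : ℕ) : ℤ) (1 : R)
      = ((v ^ (k + 1) : R⟦X⟧) : LaurentSeries R) := by
    have h := congrArg (· ^ (k + 1)) hXv
    simp only [mul_pow] at h
    rw [PowerSeries.coe_pow]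
    rw [show (HahnSeries.single ((k + 1 : ℕ) : ℤ) (1 : R))
        = HahnSeries.single (1 : ℤ) (1 : R) ^ (k + 1) by
      rw [HahnSeries.single_pow, one_pow, nsmul_eq_mul, mul_one]]
    rw [← PowerSeries.coe_X]
    exact h
  have hcoeff := congrArg (fun f : LaurentSeries R => f.coeff ((k : ℤ))) hpow
  have hadd : ((-1 : ℤ) + ((k + 1 : ℕ) : ℤ)) = (k : ℤ) := by push_cast; ring
  rw [← hadd, HahnSeries.coeff_mul_single_add, mul_one] at hcoeff
  rw [hadd, LaurentSeries.coeff_coe_powerSeries] at hcoeff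
  rw [hcoeff, stepA]
end

section
/- Let R be a commutative Q-algebra, f ∈ R[[z]] with f(0)=0, f'(0)=1, and g = f^{-1}. Then in R((z))[[u]] one has the formal identity res_{z=0} ( 1/(f(z) - u) ) = g'(u), where 1/(f(z)-u) is expanded as the geometric series Σ_{k≥0} f(z)^{-k-1} u^k and the residue is taken coefficientwise in u. -/
open PowerSeries LaurentSeries

namespace CauchyAux

variable {R : Type*} [CommRing R]

lemma qcancel [Algebra ℚ R] (n : ℕ) (x : R) (h : ((n : R) + 1) * x = 0) : x = 0 := by
  have hc : ((n : R) + 1) = algebraMap ℚ R ((n : ℚ) + 1) := by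
    rw [map_add, map_natCast, map_one]
  have hu : IsUnit ((n : R) + 1) := by
    rw [hc]
    exact IsUnit.map _ (isUnit_iff_ne_zero.mpr (Nat.cast_add_one_ne_zero n))
  obtain ⟨u, hu⟩ := hu
  calc x = (↑u⁻¹ * ↑u) * x := by simp
    _ = ↑u⁻¹ * (((n : R) + 1) * x) := by rw [hu, mul_assoc]
    _ = 0 := by rw [h, mul_zero]

lemma coeff_pow_eq_zero {g : R⟦X⟧} (hg : constantCoeff g = 0) {n i : ℕ} (h : n < i) :
    coeff n (g ^ i) = 0 := by
  have hd : (X : R⟦X⟧) ^ i ∣ g ^ i :=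
    pow_dvd_pow_of_dvd (PowerSeries.X_dvd_iff.mpr hg) i
  exact PowerSeries.X_pow_dvd_iff.mp hd n h

lemma coeff_psComp (a g : R⟦X⟧) (n : ℕ) :
    coeff n (psComp a g)
      = ∑ i ∈ Finset.range (n + 1), coeff i a * coeff n (g ^ i) := by
  simp [psComp]

lemma coeff_psComp' (a g : R⟦X⟧) (hg : constantCoeff g = 0) {n N : ℕ} (h : n < N) :
    coeff n (psComp a g)
      = ∑ i ∈ Finset.range N, coeff i a * coeff n (g ^ i) := by
  rw [coeff_psComp]
  apply Finset.sum_subset (Finset.range_subset_range.mpr h)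
  intro i hi hni
  simp only [Finset.mem_range] at hi hni
  rw [coeff_pow_eq_zero hg (by omega), mul_zero]

lemma psComp_one (g : R⟦X⟧) : psComp 1 g = 1 := by
  ext n
  rw [coeff_psComp, Finset.sum_eq_single 0]
  · simp
  · intro i _ hi
    rw [PowerSeries.coeff_one, if_neg hi, zero_mul]
  · intro hn
    exact absurd (Finset.mem_range.mpr (Nat.succ_pos n)) hn

lemma psComp_X (g : R⟦X⟧) (hg : constantCoeff g = 0) : psComp X g = g := by
  ext n
  rw [coeff_psComp' X g hg (show n < n + 2 by omega), Finset.sum_eq_single 1]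
  · simp
  · intro i _ hi
    rw [PowerSeries.coeff_X, if_neg hi, zero_mul]
  · intro hn
    exact absurd (Finset.mem_range.mpr (by omega)) hn

lemma psComp_mul (a b g : R⟦X⟧) (hg : constantCoeff g = 0) :
    psComp (a * b) g = psComp a g * psComp b g := by
  ext n
  set T : Finset (ℕ × ℕ) :=
    (Finset.range (n + 1) ×ˢ Finset.range (n + 1)).filter (fun x => x.1 + x.2 ≤ n) with hT
  have key : ∀ x : ℕ × ℕ, n < x.1 + x.2 → coeff n (g ^ (x.1 + x.2)) = 0 :=
    fun x hx => coeff_pow_eq_zero hg hx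
  -- LHS
  have hL : coeff n (psComp (a * b) g)
      = ∑ x ∈ T, coeff x.1 a * coeff x.2 b * coeff n (g ^ (x.1 + x.2)) := by
    rw [coeff_psComp]
    have : ∀ i ∈ Finset.range (n + 1),
        coeff i (a * b) * coeff n (g ^ i)
          = ∑ x ∈ Finset.HasAntidiagonal.antidiagonal i,
              coeff x.1 a * coeff x.2 b * coeff n (g ^ (x.1 + x.2)) := by
      intro i _
      rw [PowerSeries.coeff_mul, Finset.sum_mul]
      apply Finset.sum_congr rfl
      intro x hx
      rw [Finset.HasAntidiagonal.mem_antidiagonal] at hx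
      rw [hx]
    rw [Finset.sum_congr rfl this, ← Finset.sum_biUnion]
    · apply Finset.sum_congr _ (fun _ _ => rfl)
      ext x
      simp only [Finset.mem_biUnion, Finset.mem_range, Finset.HasAntidiagonal.mem_antidiagonal, hT,
        Finset.mem_filter, Finset.mem_product]
      constructor
      · rintro ⟨i, hi, hx⟩; omega
      · intro hx; exact ⟨x.1 + x.2, by omega, rfl⟩
    · intro i hi j hj hij
      simp only [Finset.disjoint_left, Finset.mem_coe, Finset.HasAntidiagonal.mem_antidiagonal]
      intro x h1 h2
      exact hij (by omega)
  -- RHS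
  have hR : coeff n (psComp a g * psComp b g)
      = ∑ x ∈ T, coeff x.1 a * coeff x.2 b * coeff n (g ^ (x.1 + x.2)) := by
    rw [PowerSeries.coeff_mul]
    have : ∀ st ∈ Finset.HasAntidiagonal.antidiagonal n,
        coeff st.1 (psComp a g) * coeff st.2 (psComp b g)
          = ∑ p ∈ Finset.range (n + 1), ∑ q ∈ Finset.range (n + 1),
              coeff p a * coeff q b * (coeff st.1 (g ^ p) * coeff st.2 (g ^ q)) := by
      intro st hst
      rw [Finset.HasAntidiagonal.mem_antidiagonal] at hst
      rw [coeff_psComp' a g hg (show st.1 < n + 1 by omega),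
        coeff_psComp' b g hg (show st.2 < n + 1 by omega), Finset.sum_mul_sum]
      apply Finset.sum_congr rfl; intro p _
      apply Finset.sum_congr rfl; intro q _
      ring
    rw [Finset.sum_congr rfl this, Finset.sum_comm]
    have : ∀ p ∈ Finset.range (n + 1),
        (∑ st ∈ Finset.HasAntidiagonal.antidiagonal n, ∑ q ∈ Finset.range (n + 1),
          coeff p a * coeff q b * (coeff st.1 (g ^ p) * coeff st.2 (g ^ q)))
        = ∑ q ∈ Finset.range (n + 1),
            coeff p a * coeff q b * coeff n (g ^ (p + q)) := by
      intro p _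
      rw [Finset.sum_comm]
      apply Finset.sum_congr rfl
      intro q _
      rw [pow_add, PowerSeries.coeff_mul, Finset.mul_sum]
    rw [Finset.sum_congr rfl this, ← Finset.sum_product']
    symm
    apply Finset.sum_subset (Finset.filter_subset _ _)
    intro x hx hxn
    simp only [hT, Finset.mem_filter, Finset.mem_product, Finset.mem_range] at hx hxn
    rw [key x (by omega), mul_zero]
  rw [hL, hR]

lemma psComp_pow (a g : R⟦X⟧) (hg : constantCoeff g = 0) (n : ℕ) :
    psComp (a ^ n) g = (psComp a g) ^ n := by
  induction n with
  | zero => simpa using psComp_one g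
  | succ m ih => rw [pow_succ, psComp_mul _ _ _ hg, ih, pow_succ]

lemma derivativeFun_X' : (X : R⟦X⟧).derivativeFun = 1 := by
  ext n
  rw [coeff_derivativeFun', PowerSeries.coeff_X, PowerSeries.coeff_one]
  rcases Nat.eq_zero_or_pos n with h | h
  · subst h; simp
  · rw [if_neg (by omega), if_neg (by omega), zero_mul]

lemma derivativeFun_pow (φ : R⟦X⟧) (n : ℕ) :
    (φ ^ (n + 1)).derivativeFun = C ((n : R) + 1) * (φ ^ n * φ.derivativeFun) := by
  induction n with
  | zero => simp
  | succ m ih =>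
    rw [pow_succ, derivativeFun_mul, ih]
    have hc : C (((m + 1 : ℕ) : R) + 1) = C ((m : R) + 1) + 1 := by
      have : ((m + 1 : ℕ) : R) + 1 = ((m : R) + 1) + 1 := by push_cast; ring
      rw [this, map_add, map_one]
    rw [hc]
    simp only [smul_eq_mul]
    ring

lemma key_res [Algebra ℚ R] (g G Ginv : R⟦X⟧) (hg : g = X * G) (hGi : G * Ginv = 1) (i : ℕ) :
    coeff (i + 1) (g.derivativeFun * Ginv ^ (i + 2)) = 0 := by
  have hL : G * Ginv.derivativeFun + Ginv * G.derivativeFun = 0 := by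
    have h := derivativeFun_mul G Ginv
    rw [hGi, derivativeFun_one] at h
    simpa [smul_eq_mul] using h.symm
  have hGinv' : Ginv.derivativeFun = -(Ginv ^ 2 * G.derivativeFun) := by
    linear_combination Ginv * hL - Ginv.derivativeFun * hGi
  have hg' : g.derivativeFun = G + X * G.derivativeFun := by
    rw [hg, derivativeFun_mul, derivativeFun_X']
    simp only [smul_eq_mul]
    ring
  have E : C ((i : R) + 1) * (g.derivativeFun * Ginv ^ (i + 2))
      = C ((i : R) + 1) * Ginv ^ (i + 1) - X * ((Ginv ^ (i + 1)).derivativeFun) := by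
    rw [derivativeFun_pow Ginv i, hGinv', hg']
    linear_combination (C ((i : R) + 1) * Ginv ^ (i + 1)) * hGi
  apply qcancel i
  have := congrArg (coeff (i + 1)) E
  rw [PowerSeries.coeff_C_mul, map_sub, PowerSeries.coeff_C_mul, coeff_succ_X_mul,
    coeff_derivativeFun'] at this
  rw [this]
  ring

lemma lagrange [Algebra ℚ R] (f g h hinv : R⟦X⟧) (hf : f = X * h) (hh : h * hinv = 1)
    (hg0 : constantCoeff g = 0) (hg1 : coeff 1 g = 1) (hfg : psComp f g = X) (k : ℕ) :
    coeff k (hinv ^ (k + 1)) = coeff (k + 1) g * ((k : R) + 1) := by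
  obtain ⟨G, hgG⟩ := PowerSeries.X_dvd_iff.mpr hg0
  have hG0 : constantCoeff G = 1 := by
    have : coeff 1 g = coeff 0 G := by rw [hgG, coeff_succ_X_mul]
    rw [hg1] at this
    rw [← coeff_zero_eq_constantCoeff_apply, ← this]
  set Ginv := PowerSeries.invOfUnit G 1 with hGinvdef
  have hGi : G * Ginv = 1 := PowerSeries.mul_invOfUnit G 1 (by simp [hG0])
  set V := psComp (hinv ^ (k + 1)) g with hVdef
  -- Step A : V = G ^ (k+1)
  have h1 : psComp (f ^ (k + 1)) g = X ^ (k + 1) := by rw [psComp_pow _ _ hg0, hfg]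
  have h2 : psComp (f ^ (k + 1)) g = g ^ (k + 1) * psComp (h ^ (k + 1)) g := by
    rw [hf, mul_pow, psComp_mul _ _ _ hg0, psComp_pow _ _ hg0, psComp_X _ hg0]
  have h3 : psComp (h ^ (k + 1)) g * V = 1 := by
    rw [hVdef, ← psComp_mul _ _ _ hg0, ← mul_pow, hh, one_pow, psComp_one]
  have h4 : X ^ (k + 1) * V = X ^ (k + 1) * G ^ (k + 1) := by
    calc X ^ (k + 1) * V = (g ^ (k + 1) * psComp (h ^ (k + 1)) g) * V := by rw [← h2, h1]
      _ = g ^ (k + 1) * (psComp (h ^ (k + 1)) g * V) := by ring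
      _ = g ^ (k + 1) := by rw [h3, mul_one]
      _ = X ^ (k + 1) * G ^ (k + 1) := by rw [hgG, mul_pow]
  have hV : V = G ^ (k + 1) := by
    ext n
    have := congrArg (coeff (n + (k + 1))) h4
    rwa [coeff_X_pow_mul, coeff_X_pow_mul] at this
  -- constant coefficients
  have hGinv0 : constantCoeff Ginv = 1 := by
    have := congrArg (constantCoeff) hGi
    rw [map_mul, hG0, one_mul, map_one] at this
    exact this
  have hcd : constantCoeff g.derivativeFun = 1 := by
    rw [← coeff_zero_eq_constantCoeff_apply, coeff_derivativeFun', hg1]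
    simp
  -- Step C
  set w : ℕ → R := fun j => coeff j (hinv ^ (k + 1)) with hw
  set S : R⟦X⟧ := ∑ j ∈ Finset.range (k + 1), C (w j) * g ^ j with hS
  have hVS : ∀ n, n ≤ k → coeff n V = coeff n S := by
    intro n hn
    rw [hVdef, coeff_psComp' _ g hg0 (show n < k + 1 by omega), hS, map_sum]
    apply Finset.sum_congr rfl
    intro j _
    rw [PowerSeries.coeff_C_mul]
  have h5 : Ginv ^ (k + 1) * V = 1 := by
    rw [hV, ← mul_pow, mul_comm Ginv G, hGi, one_pow]
  have h6 : coeff k g.derivativeFun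
      = coeff k (g.derivativeFun * Ginv ^ (k + 1) * V) := by
    rw [mul_assoc, h5, mul_one]
  set A := g.derivativeFun * Ginv ^ (k + 1) with hA
  have h7 : coeff k (A * V) = coeff k (A * S) := by
    rw [PowerSeries.coeff_mul, PowerSeries.coeff_mul]
    apply Finset.sum_congr rfl
    intro x hx
    rw [Finset.HasAntidiagonal.mem_antidiagonal] at hx
    rw [hVS x.2 (by omega)]
  have hterm : ∀ j, j ≤ k → coeff k (A * g ^ j) = if j = k then 1 else 0 := by
    intro j hj
    obtain ⟨m, hm⟩ : ∃ m, k = m + j := ⟨k - j, by omega⟩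
    have hpow : Ginv ^ (k + 1) * G ^ j = Ginv ^ (m + 1) := by
      have : k + 1 = (m + 1) + j := by omega
      rw [this, pow_add, mul_assoc, ← mul_pow, mul_comm Ginv G, hGi, one_pow, mul_one]
    have hAg : A * g ^ j = X ^ j * (g.derivativeFun * Ginv ^ (m + 1)) := by
      rw [hA, hgG, mul_pow, ← hpow]
      ring
    rw [hAg, hm, coeff_X_pow_mul]
    rcases Nat.eq_zero_or_pos m with h0 | h0
    · subst h0
      have hjk : j = k := by omega
      rw [if_pos (by omega : j = 0 + j), coeff_zero_eq_constantCoeff_apply, map_mul, hcd,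
        one_mul, pow_one, hGinv0]
    · obtain ⟨i, rfl⟩ : ∃ i, m = i + 1 := ⟨m - 1, by omega⟩
      rw [if_neg (by omega)]
      exact key_res g G Ginv hgG hGi i
  have h8 : coeff k (A * S) = w k := by
    rw [hS, Finset.mul_sum, map_sum]
    rw [Finset.sum_eq_single k]
    · have : A * (C (w k) * g ^ k) = C (w k) * (A * g ^ k) := by ring
      rw [this, PowerSeries.coeff_C_mul, hterm k le_rfl, if_pos rfl, mul_one]
    · intro j hj hjk
      simp only [Finset.mem_range] at hj
      have : A * (C (w j) * g ^ j) = C (w j) * (A * g ^ j) := by ring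
      rw [this, PowerSeries.coeff_C_mul, hterm j (by omega), if_neg hjk, mul_zero]
    · intro hk
      exact absurd (Finset.mem_range.mpr (by omega)) hk
  have hfin : coeff k g.derivativeFun = w k := by
    rw [h6, h7, h8]
  rw [show coeff k (hinv ^ (k + 1)) = w k from rfl, ← hfin, coeff_derivativeFun']

end CauchyAux

/-- the Cauchy-kernel identity `res_{z=0} (1/(f(z) - u)) = g'(u)` in `R[[u]]`,
where `1/(f(z)-u)` is expanded as the geometric series `Σ_{k≥0} f(z)^{-k-1} uᵏ` in
`R((z))[[u]]` and the residue is taken coefficientwise in `u`: the power series in `u`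
whose `k`-th coefficient is `res_{z=0} f(z)^{-k-1}` equals `g'`. -/
theorem cauchy_kernel_residue_identity
    (R : Type*) [CommRing R] [Algebra ℚ R] (f g : R⟦X⟧)
    (hf0 : constantCoeff f = 0) (hf1 : coeff 1 f = 1)
    (hg0 : constantCoeff g = 0) (hfg : psComp f g = X)
    (finv : LaurentSeries R) (hfinv : (f : LaurentSeries R) * finv = 1)
    (geom : PowerSeries (LaurentSeries R))
    (hgeom : geom = PowerSeries.mk fun k => finv ^ (k + 1)) :
    PowerSeries.mk (fun k => (PowerSeries.coeff k geom).coeff (-1)) = g.derivativeFun := by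
  obtain ⟨h, hf⟩ := PowerSeries.X_dvd_iff.mpr hf0
  have hh0 : constantCoeff h = 1 := by
    have : coeff 1 f = coeff 0 h := by rw [hf, coeff_succ_X_mul]
    rw [hf1] at this
    rw [← coeff_zero_eq_constantCoeff_apply, ← this]
  set hinv := PowerSeries.invOfUnit h 1 with hinvdef
  have hh : h * hinv = 1 := PowerSeries.mul_invOfUnit h 1 (by simp [hh0])
  have hg1 : coeff 1 g = 1 := by
    have h1 := congrArg (coeff 1) hfg
    rw [CauchyAux.coeff_psComp] at h1
    simpa [Finset.sum_range_succ, PowerSeries.coeff_X, PowerSeries.coeff_one, hf1] using h1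
  -- identify finv
  set J : LaurentSeries R := HahnSeries.single (-1 : ℤ) (1 : R) * (hinv : LaurentSeries R)
    with hJdef
  have hJ : (f : LaurentSeries R) * J = 1 := by
    rw [hJdef, hf, PowerSeries.coe_mul, PowerSeries.coe_X]
    calc HahnSeries.single (1 : ℤ) (1 : R) * (h : LaurentSeries R)
          * (HahnSeries.single (-1 : ℤ) (1 : R) * (hinv : LaurentSeries R))
        = (HahnSeries.single (1 : ℤ) (1 : R) * HahnSeries.single (-1 : ℤ) (1 : R))
            * ((h : LaurentSeries R) * (hinv : LaurentSeries R)) := by ring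
      _ = 1 := by
          rw [HahnSeries.single_mul_single, ← PowerSeries.coe_mul, hh]
          norm_num [HahnSeries.single_zero_one]
  have hfinvJ : finv = J := by
    calc finv = finv * ((f : LaurentSeries R) * J) := by rw [hJ, mul_one]
      _ = ((f : LaurentSeries R) * finv) * J := by ring
      _ = J := by rw [hfinv, one_mul]
  ext k
  rw [PowerSeries.coeff_mk, hgeom, PowerSeries.coeff_mk, hfinvJ, hJdef]
  have hpowJ : (HahnSeries.single (-1 : ℤ) (1 : R) * (hinv : LaurentSeries R)) ^ (k + 1)
      = HahnSeries.single (-(k + 1) : ℤ) (1 : R) * ((hinv ^ (k + 1) : R⟦X⟧) : LaurentSeries R) := by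
    rw [mul_pow, HahnSeries.single_pow, one_pow, PowerSeries.coe_pow]
    congr 1
    · congr 1
      simp
  rw [hpowJ]
  have hco : (-1 : ℤ) = (k : ℤ) + (-(k + 1) : ℤ) := by ring
  rw [hco, HahnSeries.coeff_single_mul_add, one_mul, LaurentSeries.coeff_coe_powerSeries,
    coeff_derivativeFun']
  exact CauchyAux.lagrange f g h hinv hf hh hg0 hg1 hfg k
end

section
/- Let R be a commutative Q-algebra and f ∈ R[[z]] with f(0)=0, f'(0)=1. Then for any k ≥ 0, res_{z=0}( f(z)^{-k-1} · f'(z) ) equals 1 if k = 0 and 0 otherwise (a change-of-variables / Lagrange-type residue formula). -/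
open PowerSeries LaurentSeries

private lemma derivPow {R : Type*} [CommRing R] (g : R⟦X⟧) : ∀ n : ℕ,
    derivativeFun (g ^ (n + 1)) = (n + 1 : R⟦X⟧) * (g ^ n * g.derivativeFun) := by
  intro n
  induction n with
  | zero => simp [derivativeFun]
  | succ m ih =>
    have : g ^ (m + 2) = g ^ (m + 1) * g := by ring
    rw [this, derivativeFun_mul, ih]
    push_cast
    ring_nf

/-- change-of-variables residue formula: for `f ∈ R[[z]]` over a commutative
`ℚ`-algebra with `f(0)=0`, `f'(0)=1`, one has `res_{z=0}(f(z)^{-k-1}·f'(z)) = δ_{k,0}`,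
where `f(z)^{-k-1}` is computed via any multiplicative inverse `finv` of `f` in `R((z))`. -/
theorem change_of_variables_residue
    (R : Type*) [CommRing R] [Algebra ℚ R] (f : R⟦X⟧)
    (hf0 : constantCoeff f = 0) (hf1 : coeff 1 f = 1)
    (finv : LaurentSeries R) (hfinv : (f : LaurentSeries R) * finv = 1) :
    ∀ k : ℕ, (finv ^ (k + 1) * (f.derivativeFun : LaurentSeries R)).coeff (-1) =
      if k = 0 then 1 else 0 := by
  obtain ⟨u, hu⟩ : (X : R⟦X⟧) ∣ f := X_dvd_iff.mpr hf0
  have hu0 : constantCoeff u = 1 := by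
    have h := hf1
    rw [hu] at h
    simpa [coeff_succ_X_mul, coeff_zero_eq_constantCoeff] using h
  have hUnit : IsUnit u := by
    rw [PowerSeries.isUnit_iff_constantCoeff, hu0]; exact isUnit_one
  obtain ⟨U, hUu⟩ := hUnit
  set v : R⟦X⟧ := ↑U⁻¹ with hv
  have huv : u * v = 1 := by rw [← hUu, hv]; exact U.mul_inv
  -- the coerced f times the candidate inverse
  have hg : (f : LaurentSeries R) * (HahnSeries.single (-1 : ℤ) (1 : R) * (v : LaurentSeries R))
      = 1 := by
    rw [hu, PowerSeries.coe_mul, PowerSeries.coe_X]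
    calc (HahnSeries.single (1 : ℤ) (1 : R) * (u : LaurentSeries R)) *
          (HahnSeries.single (-1 : ℤ) (1 : R) * (v : LaurentSeries R))
        = (HahnSeries.single (1 : ℤ) (1 : R) * HahnSeries.single (-1 : ℤ) (1 : R)) *
          ((u * v : R⟦X⟧) : LaurentSeries R) := by
          rw [PowerSeries.coe_mul]; ring
      _ = 1 := by
          rw [huv, HahnSeries.single_mul_single]
          norm_num
  have hfe : finv = HahnSeries.single (-1 : ℤ) (1 : R) * (v : LaurentSeries R) := by
    have h1 : (HahnSeries.single (-1 : ℤ) (1 : R) * (v : LaurentSeries R)) *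
        ((f : LaurentSeries R) * finv) =
        (HahnSeries.single (-1 : ℤ) (1 : R) * (v : LaurentSeries R)) * 1 := by rw [hfinv]
    calc finv = ((f : LaurentSeries R) *
          (HahnSeries.single (-1 : ℤ) (1 : R) * (v : LaurentSeries R))) * finv := by
            rw [hg, one_mul]
      _ = HahnSeries.single (-1 : ℤ) (1 : R) * (v : LaurentSeries R) := by
            rw [mul_comm ((f : LaurentSeries R)) _, mul_assoc, hfinv, mul_one]
  -- derivative of f
  have hderiv : f.derivativeFun = u + X * u.derivativeFun := by
    rw [hu, derivativeFun_mul]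
    have : PowerSeries.derivativeFun (X : R⟦X⟧) = 1 := by
      have := PowerSeries.derivative_X (R := R)
      exact this
    rw [this, smul_eq_mul, smul_eq_mul, mul_one, add_comm]
  intro k
  -- rewrite the Laurent series
  have key : finv ^ (k + 1) * (f.derivativeFun : LaurentSeries R) =
      HahnSeries.single (-(k + 1) : ℤ) (1 : R) *
        ((v ^ (k + 1) * f.derivativeFun : R⟦X⟧) : LaurentSeries R) := by
    rw [hfe, mul_pow, HahnSeries.single_pow, PowerSeries.coe_mul, PowerSeries.coe_pow,
      one_pow, mul_assoc]
    congr 2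
    ring_nf
  rw [key]
  have hsingle : (HahnSeries.single (-(k + 1) : ℤ) (1 : R) *
      ((v ^ (k + 1) * f.derivativeFun : R⟦X⟧) : LaurentSeries R)).coeff (-1) =
      PowerSeries.coeff k (v ^ (k + 1) * f.derivativeFun) := by
    have h1 : (-1 : ℤ) = (k : ℤ) + (-(k + 1)) := by ring
    rw [h1, HahnSeries.coeff_single_mul_add, one_mul]
    exact LaurentSeries.coeff_coe_powerSeries _ k
  rw [hsingle]
  -- now a pure power series computation
  have hP : v ^ (k + 1) * f.derivativeFun = v ^ k + X * (u.derivativeFun * v ^ (k + 1)) := by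
    rw [hderiv]
    have : v ^ (k + 1) * u = v ^ k := by
      rw [pow_succ, mul_assoc, mul_comm v u, huv, mul_one]
    calc v ^ (k + 1) * (u + X * u.derivativeFun)
        = v ^ (k + 1) * u + X * (u.derivativeFun * v ^ (k + 1)) := by ring
      _ = v ^ k + X * (u.derivativeFun * v ^ (k + 1)) := by rw [this]
  rw [hP]
  rcases Nat.eq_zero_or_pos k with hk | hk
  · subst hk
    simp [coeff_zero_eq_constantCoeff, map_mul, hu0]
  · obtain ⟨m, rfl⟩ : ∃ m, k = m + 1 := ⟨k - 1, (Nat.succ_pred_eq_of_pos hk).symm⟩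
    rw [if_neg (Nat.succ_ne_zero m), map_add, coeff_succ_X_mul]
    -- derivative of v : u' * v + v' * u = 0, so v' = -(u' * v^2)
    have hvd : v.derivativeFun = -(u.derivativeFun * v ^ 2) := by
      have h0 : derivativeFun (u * v) = 0 := by rw [huv, derivativeFun_one]
      rw [derivativeFun_mul, smul_eq_mul, smul_eq_mul] at h0
      have h1 : v * (u * v.derivativeFun + v * u.derivativeFun) = 0 := by rw [h0, mul_zero]
      have h2 : (v * u) * v.derivativeFun + u.derivativeFun * v ^ 2 = 0 := by
        rw [← h1]; ring
      rw [mul_comm v u, huv, one_mul] at h2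
      linear_combination h2
    -- power rule
    have hpow : derivativeFun (v ^ (m + 1)) =
        -((m + 1 : R⟦X⟧) * (u.derivativeFun * v ^ (m + 1 + 1))) := by
      rw [derivPow v m, hvd]
      ring
    have hcoeff := congrArg (PowerSeries.coeff m) hpow
    rw [show (v ^ (m + 1)).derivativeFun = d⁄dX R (v ^ (m + 1)) from rfl, coeff_derivativeFun] at hcoeff
    have hnat : ((m + 1 : ℕ) : R⟦X⟧) = C ((m + 1 : ℕ) : R) := (map_natCast C (m+1)).symm
    have hrhs : PowerSeries.coeff m
        (-((m + 1 : R⟦X⟧) * (u.derivativeFun * v ^ (m + 1 + 1)))) =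
        -(((m + 1 : ℕ) : R) * PowerSeries.coeff m (u.derivativeFun * v ^ (m + 1 + 1))) := by
      rw [map_neg]
      congr 1
      rw [show ((m + 1 : R⟦X⟧)) = C ((m + 1 : R)) by simp, coeff_C_mul]
      push_cast
      ring
    rw [hrhs] at hcoeff
    set a := PowerSeries.coeff (m + 1) (v ^ (m + 1))
    set b := PowerSeries.coeff m (u.derivativeFun * v ^ (m + 1 + 1))
    have hc : IsUnit ((m + 1 : ℕ) : R) := by
      have : ((m + 1 : ℕ) : R) = algebraMap ℚ R ((m + 1 : ℕ) : ℚ) := by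
        rw [map_natCast]
      rw [this]
      exact (IsUnit.mk0 _ (by exact_mod_cast Nat.succ_ne_zero m)).map (algebraMap ℚ R)
    have hz : ((m + 1 : ℕ) : R) * (a + b) = 0 := by
      push_cast at hcoeff ⊢
      linear_combination hcoeff
    exact (hc.mul_right_eq_zero).mp hz
end

section
/- Lagrange inversion (residue form): let R be a commutative Q-algebra, f ∈ R[[z]] with f(0)=0, f'(0)=1, and g = f^{-1} its compositional inverse. Then for all n ≥ 1 and k ≥ 1, n·[u^n] g(u)^k = k·res_{z=0}( z^{k-1} f(z)^{-n} ). -/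
open PowerSeries LaurentSeries

namespace LagAux
open Finset

variable {R : Type*} [CommRing R]

lemma coeff_psComp (p h : R⟦X⟧) (m : ℕ) :
    coeff m (psComp p h) = ∑ i ∈ range (m + 1), coeff i p * coeff m (h ^ i) := by
  simp [psComp]

lemma coeff_pow_eq_zero {h : R⟦X⟧} (hh : constantCoeff h = 0) {m i : ℕ} (him : m < i) :
    coeff m (h ^ i) = 0 := by
  obtain ⟨h₁, rfl⟩ := PowerSeries.X_dvd_iff.mpr hh
  rw [mul_pow, PowerSeries.coeff_X_pow_mul', if_neg (by omega)]

lemma coeff_pow_self {h : R⟦X⟧} (hh : constantCoeff h = 0) (d : ℕ) :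
    coeff d (h ^ d) = (coeff 1 h) ^ d := by
  obtain ⟨h₁, rfl⟩ := PowerSeries.X_dvd_iff.mpr hh
  rw [mul_pow, PowerSeries.coeff_X_pow_mul', if_pos le_rfl]
  simp [coeff_zero_eq_constantCoeff, ← map_pow]

lemma sum_sum_antidiagonal {M : Type*} [AddCommMonoid M] (m : ℕ) (F : ℕ → ℕ → M)
    (hF : ∀ a b, m < a + b → F a b = 0) :
    ∑ s ∈ range (m + 1), ∑ x ∈ Finset.HasAntidiagonal.antidiagonal s, F x.1 x.2
      = ∑ a ∈ range (m + 1), ∑ b ∈ range (m + 1), F a b := by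
  rw [← Finset.sum_product']
  rw [← Finset.sum_biUnion (s := range (m + 1)) (t := fun s => Finset.HasAntidiagonal.antidiagonal s) ?_]
  · apply Finset.sum_subset
    · intro x hx
      simp only [Finset.mem_biUnion, Finset.mem_range, Finset.HasAntidiagonal.mem_antidiagonal] at hx
      obtain ⟨s, hs, hx⟩ := hx
      simp only [Finset.mem_product, Finset.mem_range]
      omega
    · intro x hx hx'
      apply hF
      by_contra hc
      push_neg at hc
      exact hx' (Finset.mem_biUnion.mpr ⟨x.1 + x.2, Finset.mem_range.mpr (by omega),
        Finset.HasAntidiagonal.mem_antidiagonal.mpr rfl⟩)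
  · intro s _ t _ hst
    apply Finset.disjoint_left.mpr
    intro x hx hx'
    rw [Finset.HasAntidiagonal.mem_antidiagonal] at hx hx'
    exact hst (by rw [← hx, ← hx'])

lemma coeff_psComp_mul {h : R⟦X⟧} (hh : constantCoeff h = 0) (p w : R⟦X⟧) (m : ℕ) :
    coeff m (psComp p h * w) = ∑ i ∈ range (m + 1), coeff i p * coeff m (h ^ i * w) := by
  rw [PowerSeries.coeff_mul]
  have step : ∀ x ∈ Finset.HasAntidiagonal.antidiagonal m,
      coeff x.1 (psComp p h) * coeff x.2 w
        = ∑ i ∈ range (m + 1), coeff i p * (coeff x.1 (h ^ i) * coeff x.2 w) := by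
    intro x hx
    rw [Finset.HasAntidiagonal.mem_antidiagonal] at hx
    rw [coeff_psComp, Finset.sum_mul]
    simp_rw [mul_assoc]
    apply Finset.sum_subset
    · exact Finset.range_subset_range.mpr (by omega)
    · intro i _ hi
      rw [Finset.mem_range, not_lt] at hi
      rw [coeff_pow_eq_zero hh (by omega), zero_mul, mul_zero]
  rw [Finset.sum_congr rfl step, Finset.sum_comm]
  apply Finset.sum_congr rfl
  intro i _
  rw [← Finset.mul_sum, PowerSeries.coeff_mul]

lemma psComp_mul {h : R⟦X⟧} (hh : constantCoeff h = 0) (p q : R⟦X⟧) :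
    psComp (p * q) h = psComp p h * psComp q h := by
  ext m
  rw [coeff_psComp_mul hh]
  have step : ∀ i ∈ range (m + 1),
      coeff i p * coeff m (h ^ i * psComp q h)
        = ∑ b ∈ range (m + 1), coeff i p * coeff b q * coeff m (h ^ (i + b)) := by
    intro i _
    rw [mul_comm (h ^ i), coeff_psComp_mul hh, Finset.mul_sum]
    apply Finset.sum_congr rfl
    intro b _
    rw [← pow_add, add_comm b i]
    ring
  rw [Finset.sum_congr rfl step, coeff_psComp]
  have step2 : ∀ s ∈ range (m + 1),
      coeff s (p * q) * coeff m (h ^ s)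
        = ∑ x ∈ Finset.HasAntidiagonal.antidiagonal s, coeff x.1 p * coeff x.2 q * coeff m (h ^ (x.1 + x.2)) := by
    intro s _
    rw [PowerSeries.coeff_mul, Finset.sum_mul]
    apply Finset.sum_congr rfl
    intro x hx
    rw [Finset.HasAntidiagonal.mem_antidiagonal] at hx
    rw [hx]
  rw [Finset.sum_congr rfl step2,
    sum_sum_antidiagonal m (fun a b => coeff a p * coeff b q * coeff m (h ^ (a + b)))
      (fun a b hab => by rw [coeff_pow_eq_zero hh hab, mul_zero])]

lemma psComp_one {h : R⟦X⟧} : psComp (1 : R⟦X⟧) h = 1 := by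
  ext m
  rw [coeff_psComp]
  simp only [PowerSeries.coeff_one]
  rw [Finset.sum_eq_single 0]
  · simp
  · intro i _ hi; simp [hi]
  · simp

lemma psComp_pow {h : R⟦X⟧} (hh : constantCoeff h = 0) (p : R⟦X⟧) (j : ℕ) :
    psComp (p ^ j) h = (psComp p h) ^ j := by
  induction j with
  | zero => simpa using psComp_one
  | succ j ih => rw [pow_succ, psComp_mul hh, ih, pow_succ]

lemma psComp_X_left {h : R⟦X⟧} (hh : constantCoeff h = 0) : psComp (X : R⟦X⟧) h = h := by
  ext m
  rw [coeff_psComp]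
  rcases Nat.eq_zero_or_pos m with rfl | hm
  · simp [PowerSeries.coeff_X, coeff_zero_eq_constantCoeff, hh]
  · rw [Finset.sum_eq_single 1]
    · simp
    · intro i _ hi
      rw [PowerSeries.coeff_X, if_neg hi, zero_mul]
    · intro hm'
      simp at hm'; omega

lemma psComp_X_right (p : R⟦X⟧) : psComp p (X : R⟦X⟧) = p := by
  ext m
  rw [coeff_psComp]
  rw [Finset.sum_eq_single m]
  · simp [PowerSeries.coeff_X_pow]
  · intro i _ hi
    rw [PowerSeries.coeff_X_pow, if_neg (by omega), mul_zero]
  · intro hm; simp at hm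

lemma constantCoeff_psComp (p h : R⟦X⟧) :
    constantCoeff (psComp p h) = constantCoeff p := by
  rw [← coeff_zero_eq_constantCoeff_apply, coeff_psComp]
  simp

lemma psComp_sub (p q h : R⟦X⟧) : psComp (p - q) h = psComp p h - psComp q h := by
  ext m
  simp [coeff_psComp, sub_mul, Finset.sum_sub_distrib]

lemma psComp_assoc {q r : R⟦X⟧} (hq : constantCoeff q = 0) (hr : constantCoeff r = 0)
    (p : R⟦X⟧) : psComp (psComp p q) r = psComp p (psComp q r) := by
  ext m
  rw [coeff_psComp, coeff_psComp]
  have step : ∀ i ∈ range (m + 1),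
      coeff i (psComp p q) * coeff m (r ^ i)
        = ∑ j ∈ range (m + 1), coeff j p * (coeff i (q ^ j) * coeff m (r ^ i)) := by
    intro i hi
    rw [Finset.mem_range] at hi
    rw [coeff_psComp, Finset.sum_mul]
    simp_rw [mul_assoc]
    apply Finset.sum_subset (Finset.range_subset_range.mpr (by omega))
    intro j _ hj
    rw [Finset.mem_range, not_lt] at hj
    rw [coeff_pow_eq_zero hq (by omega), zero_mul, mul_zero]
  rw [Finset.sum_congr rfl step, Finset.sum_comm]
  apply Finset.sum_congr rfl
  intro j _
  rw [← Finset.mul_sum, ← psComp_pow hr, coeff_psComp]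

lemma psComp_injective {g : R⟦X⟧} (hg0 : constantCoeff g = 0) (hg1 : coeff 1 g = 1)
    {p : R⟦X⟧} (hp : psComp p g = 0) : p = 0 := by
  ext m
  induction m using Nat.strong_induction_on with
  | _ m ih =>
    have h0 : coeff m (psComp p g) = 0 := by rw [hp]; simp
    rw [coeff_psComp, Finset.sum_range_succ] at h0
    have hz : ∀ i ∈ range m, coeff i p * coeff m (g ^ i) = 0 := by
      intro i hi
      rw [Finset.mem_range] at hi
      rw [ih i hi]; simp
    rw [Finset.sum_eq_zero hz, zero_add, coeff_pow_self hg0, hg1, one_pow, mul_one] at h0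
    simpa using h0


lemma psComp_deriv {h : R⟦X⟧} (hh : constantCoeff h = 0) (p : R⟦X⟧) :
    d⁄dX R (psComp p h) = psComp (d⁄dX R p) h * d⁄dX R h := by
  ext m
  rw [PowerSeries.coeff_derivative, coeff_psComp, coeff_psComp_mul hh, Finset.sum_mul]
  have lstep : ∀ i ∈ range (m + 2),
      coeff i p * coeff (m + 1) (h ^ i) * ((m : R) + 1)
        = coeff i p * ((i : R) * coeff m (h ^ (i - 1) * d⁄dX R h)) := by
    intro i _
    have h1 : coeff (m + 1) (h ^ i) * ((m : R) + 1) = coeff m (d⁄dX R (h ^ i)) := by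
      rw [PowerSeries.coeff_derivative]
    rw [mul_assoc, h1, Derivation.leibniz_pow, map_nsmul, nsmul_eq_mul, smul_eq_mul]
  rw [Finset.sum_congr rfl lstep, Finset.sum_range_succ']
  simp only [Nat.cast_zero, zero_mul, mul_zero, add_zero, Nat.add_sub_cancel]
  apply Finset.sum_congr rfl
  intro i _
  rw [PowerSeries.coeff_derivative]
  push_cast; ring


lemma nat_cancel [Algebra ℚ R] {c : ℕ} (hc : 1 ≤ c) {x y : R}
    (h : (c : R) * x = (c : R) * y) : x = y := by
  have hcc : algebraMap ℚ R (1 / (c : ℚ)) * (c : R) = 1 := by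
    have h1 : (c : R) = algebraMap ℚ R (c : ℚ) := by simp
    rw [h1, ← map_mul, one_div, inv_mul_cancel₀ (Nat.cast_ne_zero.mpr (by omega : c ≠ 0)), map_one]
  calc x = (algebraMap ℚ R (1 / (c : ℚ)) * (c : R)) * x := by rw [hcc, one_mul]
    _ = algebraMap ℚ R (1 / (c : ℚ)) * ((c : R) * y) := by rw [mul_assoc, h]
    _ = y := by rw [← mul_assoc, hcc, one_mul]

lemma coeff_key [Algebra ℚ R] {u v : R⟦X⟧} (huv : u * v = 1) {f : R⟦X⟧} (hfX : f = X * u)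
    {c : ℕ} (hc : 1 ≤ c) : coeff c (v ^ (c + 1) * d⁄dX R f) = 0 := by
  have hvu : v * u = 1 := by rw [mul_comm]; exact huv
  have hDf : d⁄dX R f = u + X * d⁄dX R u := by
    rw [hfX, Derivation.leibniz, derivative_X, smul_eq_mul, smul_eq_mul, mul_one, add_comm]
  have hDv : u * d⁄dX R v + v * d⁄dX R u = 0 := by
    have h0 : d⁄dX R (u * v) = 0 := by rw [huv]; exact Derivation.map_one_eq_zero _
    rw [Derivation.leibniz, smul_eq_mul, smul_eq_mul] at h0
    exact h0
  have hDv2 : d⁄dX R v = -(v ^ 2 * d⁄dX R u) := by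
    have h2 := congrArg (fun w => v * w) hDv
    simp only [mul_add, mul_zero] at h2
    calc d⁄dX R v = (v * u) * d⁄dX R v := by rw [hvu, one_mul]
      _ = -(v ^ 2 * d⁄dX R u) := by linear_combination h2
  have hDvc : d⁄dX R (v ^ c) = -(c • (v ^ (c + 1) * d⁄dX R u)) := by
    rw [Derivation.leibniz_pow, hDv2, smul_eq_mul, mul_neg, ← mul_assoc, ← pow_add,
      show c - 1 + 2 = c + 1 by omega, smul_neg]
  have e1 : coeff c (v ^ c) * (c : R)
      = -((c : R) * coeff (c - 1) (v ^ (c + 1) * d⁄dX R u)) := by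
    have h3 := congrArg (coeff (c - 1)) hDvc
    rw [PowerSeries.coeff_derivative, map_neg, map_nsmul, nsmul_eq_mul] at h3
    rw [show c - 1 + 1 = c by omega] at h3
    have h4 : ((c - 1 : ℕ) : R) + 1 = (c : R) := by
      rw [Nat.cast_sub hc]; push_cast; ring
    rw [h4] at h3
    exact h3
  rw [hDf, mul_add, map_add]
  have t1 : v ^ (c + 1) * u = v ^ c := by
    rw [pow_succ, mul_assoc, hvu, mul_one]
  have t2 : coeff c (v ^ (c + 1) * (X * d⁄dX R u))
      = coeff (c - 1) (v ^ (c + 1) * d⁄dX R u) := by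
    rw [show v ^ (c + 1) * (X * d⁄dX R u) = X * (v ^ (c + 1) * d⁄dX R u) by ring]
    have h5 := PowerSeries.coeff_succ_X_mul (c - 1) (v ^ (c + 1) * d⁄dX R u)
    rw [show c - 1 + 1 = c by omega] at h5
    exact h5
  rw [t1, t2]
  have h6 : (c : R) * (coeff c (v ^ c) + coeff (c - 1) (v ^ (c + 1) * d⁄dX R u))
      = (c : R) * 0 := by
    rw [mul_zero, mul_add]; linear_combination e1
  exact nat_cancel hc h6

end LagAux

open LagAux

/-- Lagrange inversion, residue form: for `f` with `f(0)=0`, `f'(0)=1` over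
a commutative `ℚ`-algebra and `g = f⁻¹` its compositional inverse, for all `n ≥ 1`, `k ≥ 1`:
`n·[uⁿ] g(u)ᵏ = k·res_{z=0}(z^{k-1}·f(z)^{-n})`, where `f(z)^{-n}` is computed via any
multiplicative inverse `finv` of `f` in `R((z))`. -/
theorem lagrange_inversion_residue_form
    (R : Type*) [CommRing R] [Algebra ℚ R] (f g : R⟦X⟧)
    (hf0 : constantCoeff f = 0) (hf1 : coeff 1 f = 1)
    (hg0 : constantCoeff g = 0) (hfg : psComp f g = X)
    (finv : LaurentSeries R) (hfinv : (f : LaurentSeries R) * finv = 1) :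
    ∀ n k : ℕ, 1 ≤ n → 1 ≤ k →
      (n : R) * coeff n (g ^ k) =
        (k : R) * ((HahnSeries.single ((k : ℤ) - 1) (1 : R)) * finv ^ n).coeff (-1) := by
  intro n k hn hk
  obtain ⟨u, hfX⟩ := PowerSeries.X_dvd_iff.mpr hf0
  have hu1 : constantCoeff u = 1 := by
    have h := hf1
    rw [hfX, show (1 : ℕ) = 0 + 1 from rfl, PowerSeries.coeff_succ_X_mul,
      coeff_zero_eq_constantCoeff] at h
    exact h
  set v := PowerSeries.invOfUnit u 1 with hv
  have huv : u * v = 1 := PowerSeries.mul_invOfUnit u 1 (by rw [hu1]; rfl)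
  have hv1 : constantCoeff v = 1 := by
    have h := congrArg (constantCoeff) huv
    rw [map_mul, hu1, one_mul, map_one] at h
    exact h
  -- identify finv
  have hcand : (f : LaurentSeries R) *
      (HahnSeries.single (-1 : ℤ) (1 : R) * (v : LaurentSeries R)) = 1 := by
    rw [hfX, PowerSeries.coe_mul, PowerSeries.coe_X]
    rw [show (HahnSeries.single (1 : ℤ) (1 : R)) * (u : LaurentSeries R) *
        (HahnSeries.single (-1 : ℤ) (1 : R) * (v : LaurentSeries R))
      = (HahnSeries.single (1 : ℤ) (1 : R) * HahnSeries.single (-1 : ℤ) (1 : R)) *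
        ((u : LaurentSeries R) * (v : LaurentSeries R)) by ring]
    rw [HahnSeries.single_mul_single, ← PowerSeries.coe_mul, huv, one_mul]
    norm_num [HahnSeries.single_zero_one]
  have hfinv_eq : finv = HahnSeries.single (-1 : ℤ) (1 : R) * (v : LaurentSeries R) := by
    calc finv = finv * ((f : LaurentSeries R) *
          (HahnSeries.single (-1 : ℤ) (1 : R) * (v : LaurentSeries R))) := by
            rw [hcand, mul_one]
      _ = ((f : LaurentSeries R) * finv) *
          (HahnSeries.single (-1 : ℤ) (1 : R) * (v : LaurentSeries R)) := by ring
      _ = HahnSeries.single (-1 : ℤ) (1 : R) * (v : LaurentSeries R) := by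
            rw [hfinv, one_mul]
  -- simplify the residue
  have hres : ((HahnSeries.single ((k : ℤ) - 1) (1 : R)) * finv ^ n).coeff (-1)
      = ((v ^ n : R⟦X⟧) : LaurentSeries R).coeff ((n : ℤ) - k) := by
    rw [hfinv_eq, mul_pow, HahnSeries.single_pow, one_pow, ← PowerSeries.coe_pow, ← mul_assoc,
      HahnSeries.single_mul_single, one_mul]
    have h7 := HahnSeries.coeff_single_mul_add (Γ := ℤ) (R := R) (r := (1 : R))
      (x := ((v ^ n : R⟦X⟧) : LaurentSeries R)) (a := (n : ℤ) - k) (b := (k : ℤ) - 1 + n • (-1 : ℤ))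
    rw [show ((n : ℤ) - k) + ((k : ℤ) - 1 + n • (-1 : ℤ)) = -1 by simp; ring] at h7
    rw [h7, one_mul]
  rw [hres]
  by_cases hkn : k ≤ n
  · -- main case
    have hcast : ((n : ℤ) - k) = ((n - k : ℕ) : ℤ) := by omega
    rw [hcast, LaurentSeries.coeff_coe_powerSeries]
    -- derivative equation
    have hg1 : coeff 1 g = 1 := by
      have h := congrArg (coeff 1) hfg
      rw [coeff_psComp, PowerSeries.coeff_X, if_pos rfl] at h
      rw [Finset.sum_range_succ, Finset.sum_range_one] at h
      simp only [pow_zero, pow_one, coeff_zero_eq_constantCoeff_apply] at h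
      rw [hf0, hf1, zero_mul, one_mul, zero_add] at h
      exact h
    have hgf : psComp g f = X := by
      have hcc : constantCoeff (psComp f g) = 0 := by
        rw [constantCoeff_psComp, hf0]
      have h1 : psComp (psComp g f) g = g := by
        rw [psComp_assoc hf0 hg0, hfg, psComp_X_right]
      have h2 : psComp (psComp g f - X) g = 0 := by
        rw [psComp_sub, h1, psComp_X_left hg0, sub_self]
      have h3 := psComp_injective hg0 hg1 h2
      exact sub_eq_zero.mp h3
    have hE2 : psComp (d⁄dX R (g ^ k)) f * d⁄dX R f = d⁄dX R ((X : R⟦X⟧) ^ k) := by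
      rw [← psComp_deriv hf0, psComp_pow hf0, hgf]
    have hmul := congrArg (fun w => coeff (n - 1) (w * v ^ n)) hE2
    simp only [mul_assoc] at hmul
    rw [coeff_psComp_mul hf0] at hmul
    -- RHS of hmul
    have hDXk : coeff (n - 1) (d⁄dX R ((X : R⟦X⟧) ^ k) * v ^ n)
        = (k : R) * coeff (n - k) (v ^ n) := by
      rw [Derivation.leibniz_pow, derivative_X, smul_eq_mul, mul_one, smul_mul_assoc,
        map_nsmul, nsmul_eq_mul, PowerSeries.coeff_X_pow_mul', if_pos (by omega : k - 1 ≤ n - 1),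
        show n - 1 - (k - 1) = n - k by omega]
    rw [hDXk] at hmul
    have hfi : ∀ i, i ≤ n - 1 → coeff (n - 1) (f ^ i * (d⁄dX R f * v ^ n))
        = coeff (n - 1 - i) (v ^ (n - i) * d⁄dX R f) := by
      intro i hi
      rw [hfX, mul_pow]
      rw [show X ^ i * u ^ i * (d⁄dX R (X * u) * v ^ n)
          = X ^ i * (u ^ i * v ^ n * d⁄dX R (X * u)) by ring]
      rw [PowerSeries.coeff_X_pow_mul', if_pos hi]
      have hsplit : v ^ n = v ^ i * v ^ (n - i) := by
        rw [← pow_add, show i + (n - i) = n by omega]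
      rw [hsplit, ← mul_assoc, ← mul_pow, huv, one_pow, one_mul]
    have hDf0 : constantCoeff (d⁄dX R f) = 1 := by
      rw [← coeff_zero_eq_constantCoeff_apply]
      have := PowerSeries.coeff_derivative f 0
      rw [this, show (0 : ℕ) + 1 = 1 from rfl, hf1]
      norm_num
    rw [Finset.sum_eq_single (n - 1)] at hmul
    · rw [hfi (n - 1) le_rfl, show n - 1 - (n - 1) = 0 by omega,
        show n - (n - 1) = 1 by omega, pow_one, coeff_zero_eq_constantCoeff_apply,
        map_mul, hv1, hDf0, one_mul, mul_one] at hmul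
      rw [PowerSeries.coeff_derivative, show n - 1 + 1 = n by omega] at hmul
      have hhc : ((n - 1 : ℕ) : R) + 1 = (n : R) := by
        rw [Nat.cast_sub hn]; push_cast; ring
      rw [hhc] at hmul
      linear_combination hmul
    · intro i hir hine
      rw [Finset.mem_range] at hir
      have hile : i ≤ n - 1 := by omega
      rw [hfi i hile, show n - i = (n - 1 - i) + 1 by omega,
        coeff_key huv hfX (by omega : 1 ≤ n - 1 - i), mul_zero]
    · intro habs
      exact absurd (Finset.mem_range.mpr (by omega)) habs
  · -- degenerate case k > n
    push_neg at hkn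
    rw [PowerSeries.coeff_coe, if_pos (by omega), mul_zero,
      coeff_pow_eq_zero hg0 (by omega), mul_zero]
end

section
/- Let R be a commutative Q-algebra and f ∈ R[[z]] with f(0)=0, f'(0)=1, g = f^{-1}. Then the two 'coordinates' c = f(z) and c^{-1} = f(z)^{-1} determine each other: the coefficients of g (equivalently of f) are determined by the sequence of residues (res_{z=0} f(z)^{-k-1})_{k≥0}. Precisely, if f₁, f₂ ∈ R[[z]] both have f_i(0)=0, f_i'(0)=1 and res_{z=0} f₁(z)^{-k-1} = res_{z=0} f₂(z)^{-k-1} for all k ≥ 0, then f₁ = f₂. -/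
open PowerSeries LaurentSeries

private lemma aux_pow {A : Type*} [CommRing A] (a b : A) (n : ℕ) :
    ∃ S, (a + b) ^ (n + 1) = a ^ (n + 1) + (n + 1) * a ^ n * b + b ^ 2 * S := by
  induction n with
  | zero => exact ⟨0, by ring⟩
  | succ n ih =>
    obtain ⟨S, hS⟩ := ih
    refine ⟨a * S + (n + 1) * a ^ n + b * S, ?_⟩
    rw [pow_succ, hS]
    push_cast
    ring

/-- the residues determine the coordinate: if `f₁, f₂ ∈ R[[z]]` over a
commutative `ℚ`-algebra both satisfy `fᵢ(0)=0`, `fᵢ'(0)=1` and have equal residues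
`res_{z=0} f₁(z)^{-k-1} = res_{z=0} f₂(z)^{-k-1}` for all `k ≥ 0`, then `f₁ = f₂`. The
negative powers are computed via multiplicative inverses `finvᵢ` of the `fᵢ` in `R((z))`. -/
theorem residues_determine_the_series
    (R : Type*) [CommRing R] [Algebra ℚ R] (f₁ f₂ : R⟦X⟧)
    (hf₁0 : constantCoeff f₁ = 0) (hf₁1 : coeff 1 f₁ = 1)
    (hf₂0 : constantCoeff f₂ = 0) (hf₂1 : coeff 1 f₂ = 1)
    (finv₁ finv₂ : LaurentSeries R)
    (hfinv₁ : (f₁ : LaurentSeries R) * finv₁ = 1)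
    (hfinv₂ : (f₂ : LaurentSeries R) * finv₂ = 1)
    (hres : ∀ k : ℕ, (finv₁ ^ (k + 1)).coeff (-1) = (finv₂ ^ (k + 1)).coeff (-1)) :
    f₁ = f₂ := by
  classical
  by_contra hne
  set d := f₂ - f₁ with hdd
  have hd : d ≠ 0 := sub_ne_zero.mpr (Ne.symm hne)
  have hex : ∃ n, coeff n d ≠ 0 := by
    by_contra h
    push_neg at h
    exact hd (PowerSeries.ext fun n => by simpa using h n)
  have hn : coeff (Nat.find hex) d ≠ 0 := Nat.find_spec hex
  have hlt : ∀ k < Nat.find hex, coeff k d = 0 := fun k hk => by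
    simpa using Nat.find_min hex hk
  have hn0 : Nat.find hex ≠ 0 := by
    intro h
    apply hn
    rw [h, coeff_zero_eq_constantCoeff, hdd, map_sub, hf₁0, hf₂0, sub_zero]
  obtain ⟨m, hm⟩ : ∃ m, Nat.find hex = m + 1 :=
    ⟨Nat.find hex - 1, (Nat.succ_pred_eq_of_pos (Nat.pos_of_ne_zero hn0)).symm⟩
  rw [hm] at hn hlt
  set c := coeff (m + 1) d with hc
  -- factor fᵢ = X * gᵢ
  obtain ⟨g₁, hg₁⟩ : (X : R⟦X⟧) ∣ f₁ := X_dvd_iff.mpr hf₁0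
  obtain ⟨g₂, hg₂⟩ : (X : R⟦X⟧) ∣ f₂ := X_dvd_iff.mpr hf₂0
  have hg₁0 : constantCoeff g₁ = 1 := by
    have := hf₁1
    rwa [hg₁, coeff_succ_X_mul, coeff_zero_eq_constantCoeff] at this
  have hg₂0 : constantCoeff g₂ = 1 := by
    have := hf₂1
    rwa [hg₂, coeff_succ_X_mul, coeff_zero_eq_constantCoeff] at this
  -- factor d = X^(m+1) * e
  obtain ⟨e, he⟩ : (X : R⟦X⟧) ^ (m + 1) ∣ d := X_pow_dvd_iff.mpr hlt
  have he0 : constantCoeff e = c := by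
    rw [hc, he, ← coeff_zero_eq_constantCoeff]
    have := coeff_X_pow_mul e (m + 1) 0
    simpa using this.symm
  -- the binomial expansion
  obtain ⟨S, hS⟩ := aux_pow f₁ d m
  have hf₂d : f₂ = f₁ + d := by rw [hdd]; ring
  set A : R⟦X⟧ := ((m : R⟦X⟧) + 1) * g₁ ^ m * e + X * e ^ 2 * S with hAdef
  have hA : f₂ ^ (m + 1) - f₁ ^ (m + 1) = X ^ (2 * m + 1) * A := by
    have h1 : f₂ ^ (m + 1) - f₁ ^ (m + 1) = (m + 1) * f₁ ^ m * d + d ^ 2 * S := by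
      rw [hf₂d, hS]; ring
    rw [h1, hg₁, he, hAdef]
    push_cast
    ring
  have hA0 : constantCoeff A = (m + 1 : R) * c := by
    rw [hAdef]
    simp [map_add, map_mul, map_pow, hg₁0, he0, constantCoeff_X]
  -- B and its inverse
  set B : R⟦X⟧ := g₁ * g₂ with hBdef
  have hB0 : constantCoeff B = 1 := by rw [hBdef, map_mul, hg₁0, hg₂0, mul_one]
  set B' : R⟦X⟧ := PowerSeries.invOfUnit B 1 with hB'def
  have hBB' : B * B' = 1 := PowerSeries.mul_invOfUnit B 1 (by simpa using hB0)
  have hB'0 : constantCoeff B' = 1 := by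
    rw [hB'def]
    simpa using PowerSeries.constantCoeff_invOfUnit B 1
  have hf₁f₂ : f₁ * f₂ = X ^ 2 * B := by rw [hg₁, hg₂, hBdef]; ring
  -- Laurent series computations
  set T : LaurentSeries R := HahnSeries.single (-1 : ℤ) (1 : R) with hTdef
  have hXT : ((X : R⟦X⟧) : LaurentSeries R) * T = 1 := by
    rw [PowerSeries.coe_X, hTdef, HahnSeries.single_mul_single]
    norm_num [HahnSeries.single_zero_one]
  set N := m + 1 with hN
  have h1 : ((f₁ : LaurentSeries R)) ^ N * finv₁ ^ N = 1 := by
    rw [← mul_pow, hfinv₁, one_pow]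
  have h2 : ((f₂ : LaurentSeries R)) ^ N * finv₂ ^ N = 1 := by
    rw [← mul_pow, hfinv₂, one_pow]
  have step1 : finv₁ ^ N - finv₂ ^ N =
      (((f₂ : LaurentSeries R)) ^ N - ((f₁ : LaurentSeries R)) ^ N) * (finv₁ ^ N * finv₂ ^ N) := by
    linear_combination (finv₂ ^ N) * h1 - (finv₁ ^ N) * h2
  have hcoeA : ((f₂ : LaurentSeries R)) ^ N - ((f₁ : LaurentSeries R)) ^ N =
      ((X : R⟦X⟧) : LaurentSeries R) ^ (2 * m + 1) * (A : LaurentSeries R) := by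
    rw [← PowerSeries.coe_pow, ← PowerSeries.coe_pow, ← PowerSeries.coe_sub, hA,
      PowerSeries.coe_mul, PowerSeries.coe_pow]
  have hXTn : ((X : R⟦X⟧) : LaurentSeries R) ^ (2 * N) * T ^ (2 * N) = 1 := by
    rw [← mul_pow, hXT, one_pow]
  have hBB'L : ((B : LaurentSeries R)) * (B' : LaurentSeries R) = 1 := by
    rw [← PowerSeries.coe_mul, hBB', PowerSeries.coe_one]
  have hprod1 : ((f₁ : LaurentSeries R) * (f₂ : LaurentSeries R)) ^ N *
      (T ^ (2 * N) * ((B' ^ N : R⟦X⟧) : LaurentSeries R)) = 1 := by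
    rw [← PowerSeries.coe_mul, hf₁f₂, PowerSeries.coe_mul, PowerSeries.coe_pow,
      PowerSeries.coe_pow]
    calc (((X : R⟦X⟧) : LaurentSeries R) ^ 2 * (B : LaurentSeries R)) ^ N *
        (T ^ (2 * N) * ((B' : LaurentSeries R)) ^ N)
        = (((X : R⟦X⟧) : LaurentSeries R) ^ (2 * N) * T ^ (2 * N)) *
          (((B : LaurentSeries R)) * (B' : LaurentSeries R)) ^ N := by ring
      _ = 1 := by rw [hXTn, hBB'L, one_pow, one_mul]
  have hprod2 : ((f₁ : LaurentSeries R) * (f₂ : LaurentSeries R)) ^ N *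
      (finv₁ ^ N * finv₂ ^ N) = 1 := by
    have h3 : ((f₁ : LaurentSeries R) * finv₁) ^ N * ((f₂ : LaurentSeries R) * finv₂) ^ N = 1 := by
      rw [hfinv₁, hfinv₂, one_pow, one_mul]
    linear_combination h3
  have hinvprod : finv₁ ^ N * finv₂ ^ N =
      T ^ (2 * N) * ((B' ^ N : R⟦X⟧) : LaurentSeries R) := by
    calc finv₁ ^ N * finv₂ ^ N
        = (finv₁ ^ N * finv₂ ^ N) * (((f₁ : LaurentSeries R) * (f₂ : LaurentSeries R)) ^ N *
            (T ^ (2 * N) * ((B' ^ N : R⟦X⟧) : LaurentSeries R))) := by rw [hprod1, mul_one]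
      _ = (T ^ (2 * N) * ((B' ^ N : R⟦X⟧) : LaurentSeries R)) *
            (((f₁ : LaurentSeries R) * (f₂ : LaurentSeries R)) ^ N *
              (finv₁ ^ N * finv₂ ^ N)) := by ring
      _ = _ := by rw [hprod2, mul_one]
  have key : finv₁ ^ N - finv₂ ^ N = T * ((A * B' ^ N : R⟦X⟧) : LaurentSeries R) := by
    rw [step1, hcoeA, hinvprod, PowerSeries.coe_mul]
    have h2N : 2 * N = (2 * m + 1) + 1 := by omega
    rw [h2N, pow_succ]
    calc ((X : R⟦X⟧) : LaurentSeries R) ^ (2 * m + 1) * (A : LaurentSeries R) *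
        ((T ^ (2 * m + 1) * T) * ((B' ^ N : R⟦X⟧) : LaurentSeries R))
        = (((X : R⟦X⟧) : LaurentSeries R) * T) ^ (2 * m + 1) *
          (T * ((A : LaurentSeries R) * ((B' ^ N : R⟦X⟧) : LaurentSeries R))) := by ring
      _ = T * ((A : LaurentSeries R) * ((B' ^ N : R⟦X⟧) : LaurentSeries R)) := by
          rw [hXT, one_pow, one_mul]
  -- extract the coefficient at -1
  have hzero : (T * ((A * B' ^ N : R⟦X⟧) : LaurentSeries R)).coeff (-1) = 0 := by
    rw [← key, HahnSeries.coeff_sub, hres m, sub_self]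
  have hcc : (T * ((A * B' ^ N : R⟦X⟧) : LaurentSeries R)).coeff (-1) =
      constantCoeff (A * B' ^ N) := by
    rw [hTdef]
    have h5 := HahnSeries.coeff_single_mul_add (a := (0 : ℤ)) (b := (-1 : ℤ)) (r := (1 : R))
      (x := ((A * B' ^ N : R⟦X⟧) : LaurentSeries R))
    rw [zero_add, one_mul] at h5
    rw [h5]
    have h6 := LaurentSeries.coeff_coe_powerSeries (A * B' ^ N) 0
    rw [Nat.cast_zero] at h6
    rw [h6, coeff_zero_eq_constantCoeff]
  have hfin : ((m : R) + 1) * c = 0 := by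
    have h5 : constantCoeff (A * B' ^ N) = 0 := by rw [← hcc, hzero]
    rw [map_mul, map_pow, hA0, hB'0, one_pow, mul_one] at h5
    exact_mod_cast h5
  have hcast : ((m : R) + 1) = algebraMap ℚ R ((m : ℚ) + 1) := by
    push_cast
    simp
  have : c = 0 := by
    have h6 : algebraMap ℚ R (((m : ℚ) + 1)⁻¹) * (((m : R) + 1) * c) = c := by
      rw [← mul_assoc, hcast, ← map_mul, inv_mul_cancel₀ (by positivity), map_one, one_mul]
    rw [hfin, mul_zero] at h6
    exact h6.symm
  exact hn this
end
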